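/- arXiv:1906.02854 — 6 statements merged into one kernel-verified Lean document; each statement's English description precedes it below -/
import Mathlib

section
/- Let n = 3t + r with r ∈ {0,1,2} and t ≥ 1. There exists a 2-edge-coloring of the complete graph K_n with no monochromatic cycle of length greater than 2t + r. Explicitly, partition the vertices into U_1 of size 2t+r and U_2 of size t, color all edges inside U_1 and inside U_2 blue, and all edges between U_1 and U_2 red; then no monochromatic cycle has length exceeding 2t+r. -/
/-!
The blue graph has no edge between `U₁` and `U₂`, so a blue cycle stays inside one part and has
at most `max |U₁| |U₂| = 2t + r` vertices. The red graph is bipartite with parts `U₁` and `U₂`,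
so the vertices of a red cycle alternate between the parts and its length is at most
`2 |U₂| = 2t`.
-/

/-- `G` contains a cycle of length `ℓ`. -/
def hasCycleLength {V : Type*} (G : SimpleGraph V) (ℓ : ℕ) : Prop :=
  ∃ (u : V) (c : G.Walk u u), c.IsCycle ∧ c.length = ℓ

open Finset

theorem List.Nodup.length_le_card_of_forall_mem {α : Type*} {l : List α} (hl : l.Nodup)
    {s : Finset α} (h : ∀ a ∈ l, a ∈ s) : l.length ≤ #s :=
  (hl.subperm fun a ha => mem_toList.2 (h a ha)).length_le.trans_eq s.length_toList

namespace SimpleGraph.Walk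

variable {V : Type*} {G : SimpleGraph V}

theorem IsCycle.length_le_card_of_forall_mem {u : V} {c : G.Walk u u} (hc : c.IsCycle)
    {s : Finset V} (h : ∀ v ∈ c.support, v ∈ s) : c.length ≤ #s := by
  have hlen : c.support.tail.length = c.length := by simp [List.length_tail]
  exact hlen ▸ hc.support_nodup.length_le_card_of_forall_mem
    fun v hv => h v (List.mem_of_mem_tail hv)

theorem mem_iff_of_mem_support {s : Set V} (hG : ∀ ⦃x y⦄, G.Adj x y → (x ∈ s ↔ y ∈ s))
    {u v w : V} (p : G.Walk u v) (hw : w ∈ p.support) : w ∈ s ↔ u ∈ s := by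
  induction p with
  | nil => rw [List.mem_singleton.1 hw]
  | cons h p ih =>
    rcases List.mem_cons.1 hw with rfl | hw
    · rfl
    · exact (ih hw).trans (hG h).symm

theorem IsCycle.length_le_max_card [Fintype V] [DecidableEq V] {u : V} {c : G.Walk u u}
    (hc : c.IsCycle) {s : Finset V} (hG : ∀ ⦃x y⦄, G.Adj x y → (x ∈ s ↔ y ∈ s)) :
    c.length ≤ max #s #sᶜ := by
  by_cases hu : u ∈ s
  · refine (hc.length_le_card_of_forall_mem fun v hv => ?_).trans (le_max_left _ _)
    exact (c.mem_iff_of_mem_support (s := ↑s) hG hv).2 hu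
  · refine (hc.length_le_card_of_forall_mem fun v hv => ?_).trans (le_max_right _ _)
    exact mem_compl.2 fun h => hu ((c.mem_iff_of_mem_support (s := ↑s) hG hv).1 h)

variable [DecidableEq V] {s : Set V} {t : Finset V}

theorem two_mul_countP_support_tail (hG : G.IsBipartiteWith s t) {u v : V} (p : G.Walk u v) :
    2 * p.support.tail.countP (· ∈ t) + (if u ∈ t then 1 else 0)
      = p.length + (if v ∈ t then 1 else 0) := by
  induction p with
  | nil => simp
  | @cons a b c h p ih =>
    have hab : a ∈ t ↔ b ∉ t := by
      rcases hG.mem_of_adj h with ⟨ha, hb⟩ | ⟨ha, hb⟩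
      · exact iff_of_false (Set.disjoint_left.1 hG.disjoint ha) (not_not.2 hb)
      · exact iff_of_true ha fun hb' => Set.disjoint_left.1 hG.disjoint hb hb'
    rw [support_cons, List.tail_cons, ← p.cons_tail_support, List.countP_cons, length_cons]
    by_cases ha : a ∈ t <;> by_cases hb : b ∈ t <;> simp_all <;> omega

theorem IsCycle.length_le_two_mul_card (hG : G.IsBipartiteWith s t) {u : V} {c : G.Walk u u}
    (hc : c.IsCycle) : c.length ≤ 2 * #t := by
  have hcount := two_mul_countP_support_tail hG c
  rw [add_left_inj, List.countP_eq_length_filter] at hcount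
  rw [← hcount]
  exact Nat.mul_le_mul_left 2 <| (hc.support_nodup.filter _).length_le_card_of_forall_mem
    fun v hv => by simpa using List.of_mem_filter hv

end SimpleGraph.Walk

open SimpleGraph

theorem stmt1_general (t r n : ℕ) (hn : n = 3 * t + r) :
    -- red edges: between `U₁ = {v : v < 2t + r}` and `U₂ = {v : v ≥ 2t + r}`
    let R : SimpleGraph (Fin n) :=
      SimpleGraph.fromRel (fun v w => v.val < 2 * t + r ∧ ¬ w.val < 2 * t + r)
    -- blue edges: inside `U₁` and inside `U₂`
    let B : SimpleGraph (Fin n) :=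
      SimpleGraph.fromRel (fun v w => (v.val < 2 * t + r ↔ w.val < 2 * t + r))
    R ⊔ B = ⊤ ∧
      ∀ ℓ : ℕ, 2 * t + r < ℓ → ¬ hasCycleLength R ℓ ∧ ¬ hasCycleLength B ℓ := by
  intro R B
  let U₁ : Finset (Fin n) := {v | v.val < 2 * t + r}
  have hU₁ : #U₁ = 2 * t + r := by rw [Fin.card_filter_val_lt]; omega
  have hU₂ : #U₁ᶜ = t := by rw [card_compl, Fintype.card_fin]; omega
  have hR : R.IsBipartiteWith ↑U₁ ↑U₁ᶜ :=
    ⟨by rw [coe_compl]; exact disjoint_compl_right, fun v w h => by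
      simp only [R, fromRel_adj] at h
      simp only [U₁, coe_compl, coe_filter, mem_univ, true_and, Set.mem_compl_iff,
        Set.mem_ofPred_eq]
      omega⟩
  have hB : ∀ ⦃v w⦄, B.Adj v w → (v ∈ U₁ ↔ w ∈ U₁) := fun v w h => by
    simp only [B, fromRel_adj] at h
    simp only [U₁, mem_filter, mem_univ, true_and]
    tauto
  refine ⟨?_, fun ℓ hℓ => ⟨?_, ?_⟩⟩
  · ext v w
    simp only [R, B, sup_adj, fromRel_adj, top_adj]
    tauto
  · rintro ⟨u, c, hc, rfl⟩
    have := hc.length_le_two_mul_card hR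
    omega
  · rintro ⟨u, c, hc, rfl⟩
    have := hc.length_le_max_card hB
    omega

theorem stmt1 (t r n : ℕ) (ht : 1 ≤ t) (hr : r ≤ 2) (hn : n = 3 * t + r) :
    -- red edges: between `U₁ = {v : v < 2t + r}` and `U₂ = {v : v ≥ 2t + r}`
    let R : SimpleGraph (Fin n) :=
      SimpleGraph.fromRel (fun v w => v.val < 2 * t + r ∧ ¬ w.val < 2 * t + r)
    -- blue edges: inside `U₁` and inside `U₂`
    let B : SimpleGraph (Fin n) :=
      SimpleGraph.fromRel (fun v w => (v.val < 2 * t + r ↔ w.val < 2 * t + r))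
    R ⊔ B = ⊤ ∧
      ∀ ℓ : ℕ, 2 * t + r < ℓ → ¬ hasCycleLength R ℓ ∧ ¬ hasCycleLength B ℓ :=
  stmt1_general t r n hn
end

section
/- Let n ≥ 8 and partition an n-element vertex set into sets U_1, U_2, U_3, U_4, {x, y} with ⌊(n-2)/4⌋ ≤ |U_1| ≤ |U_2| ≤ |U_3| ≤ |U_4| ≤ ⌈(n-2)/4⌉. Let G be obtained from K_n by deleting all edges between U_1 and U_4 and all edges between U_2 and U_3. Then (a) the minimum degree of G equals n - 1 - ⌈(n-2)/4⌉ = ⌊(3n-2)/4⌋, and (b) there exists a 2-edge-coloring of G whose longest monochromatic cycle has length at most 2⌈(n-2)/4⌉ + 1, which is strictly less than 2⌊n/3⌋ + (n mod 3). -/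
/-!
A vertex of `U₁, …, U₄` misses exactly the opposite block (`U₁ ↔ U₄`, `U₂ ↔ U₃`), so its degree
is `n - 1` minus the size of that block; the minimum `n - 1 - |U₄|` is attained on `U₁`.

Colour red the edges at `x` and those between `U₁, U₃` and between `U₂, U₄`, and blue the rest.
Without `x`, the red graph has no edges leaving `U₁ ∪ U₃`, `U₂ ∪ U₄` or `{y}`; without `y`, the
blue graph has none leaving `U₁ ∪ U₂`, `U₃ ∪ U₄` or `{x}`. A cycle passes through the removed
vertex at most once, so apart from it the cycle lies in one of these pieces, each of size at most
`2⌈(n-2)/4⌉`.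
-/

open Finset

namespace SimpleGraph

variable {V : Type*} {H : SimpleGraph V}

theorem degree_eq_card_sub_card_of_adj_iff [Fintype V] [DecidableEq V] [DecidableRel H.Adj]
    {v : V} {N : Finset V} (hv : v ∉ N) (hadj : ∀ w, H.Adj v w ↔ w ≠ v ∧ w ∉ N) :
    H.degree v = Fintype.card V - 1 - #N := by
  have : H.neighborFinset v = (insert v N)ᶜ := by
    ext w
    simp [hadj]
  rw [← card_neighborFinset_eq_degree, this, card_compl, card_insert_of_notMem hv]
  omega

namespace Walk

theorem support_subset_of_closed {S : Finset V} {x : V}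
    (hS : ∀ a ∈ S, ∀ b, H.Adj a b → b = x ∨ b ∈ S) :
    ∀ {a b : V} (p : H.Walk a b), a ∈ S → x ∉ p.support → ∀ v ∈ p.support, v ∈ S
  | _, _, nil, ha, _, _, hv => by rw [support_nil, List.mem_singleton] at hv; rwa [hv]
  | a, _, cons h p, ha, hx, v, hv => by
    rw [support_cons, List.mem_cons, not_or] at *
    obtain rfl | hv := hv
    · exact ha
    · have hb := (hS a ha _ h).resolve_left fun e => hx.2 (e ▸ p.start_mem_support)
      exact support_subset_of_closed hS p hb hx.2 v hv

theorem IsPath.length_lt_card_of_closed [DecidableEq V] {S : Finset V} {x a b : V}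
    {p : H.Walk a b} (hp : p.IsPath) (hS : ∀ a ∈ S, ∀ b, H.Adj a b → b = x ∨ b ∈ S)
    (ha : a ∈ S) (hx : x ∉ p.support) : p.length < #S := by
  have hsub : p.support.toFinset ⊆ S := fun v hv =>
    support_subset_of_closed hS p ha hx v (List.mem_toFinset.1 hv)
  have := card_le_card hsub
  rw [List.toFinset_card_of_nodup hp.support_nodup, length_support] at this
  omega

theorem IsCycle.length_le_of_closed [DecidableEq V] {x : V} {m : ℕ}
    (hS : ∀ v ≠ x, ∃ S : Finset V, v ∈ S ∧ #S ≤ m ∧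
      ∀ a ∈ S, ∀ b, H.Adj a b → b = x ∨ b ∈ S)
    {u : V} {c : H.Walk u u} (hc : c.IsCycle) : c.length ≤ m + 1 := by
  by_cases hx : x ∈ c.support
  · -- rotated to start at `x`, the cycle is `x, z, …, w, x` with `z, …, w` a path avoiding `x`
    have hc' := hc.rotate hx
    rw [← length_rotate c x hx]
    obtain ⟨w, h, p, hp⟩ := not_nil_iff.1 hc'.not_nil
    rw [hp, cons_isCycle_iff] at hc'
    rw [hp]
    obtain ⟨z, h', q, hq⟩ := not_nil_iff.1 (fun hn : p.reverse.Nil => h.ne hn.eq)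
    have hpath := hc'.1.reverse
    rw [hq, cons_isPath_iff] at hpath
    obtain ⟨S, hzS, hSm, hS'⟩ := hS z h'.ne'
    have := hpath.1.length_lt_card_of_closed hS' hzS hpath.2
    have hlen : p.length = q.length + 1 := by rw [← length_reverse, hq, length_cons]
    rw [length_cons]
    omega
  · obtain ⟨w, h, p, rfl⟩ := not_nil_iff.1 hc.not_nil
    rw [cons_isCycle_iff] at hc
    rw [support_cons, List.mem_cons, not_or] at hx
    obtain ⟨S, hwS, hSm, hS'⟩ := hS w fun e => hx.2 (e ▸ p.start_mem_support)
    have := hc.1.length_lt_card_of_closed hS' hwS hx.2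
    rw [length_cons]
    omega

end Walk

end SimpleGraph

section Construction

variable {V : Type*} {U1 U2 U3 U4 : Finset V} {x y : V}

def IsBlockPartition (U1 U2 U3 U4 : Finset V) (x y : V) : Prop :=
  ∀ v, (v ∈ U1 ∧ v ∉ U2 ∧ v ∉ U3 ∧ v ∉ U4 ∧ v ≠ x ∧ v ≠ y) ∨
    (v ∉ U1 ∧ v ∈ U2 ∧ v ∉ U3 ∧ v ∉ U4 ∧ v ≠ x ∧ v ≠ y) ∨
    (v ∉ U1 ∧ v ∉ U2 ∧ v ∈ U3 ∧ v ∉ U4 ∧ v ≠ x ∧ v ≠ y) ∨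
    (v ∉ U1 ∧ v ∉ U2 ∧ v ∉ U3 ∧ v ∈ U4 ∧ v ≠ x ∧ v ≠ y) ∨
    (v ∉ U1 ∧ v ∉ U2 ∧ v ∉ U3 ∧ v ∉ U4 ∧ v = x ∧ v ≠ y) ∨
    (v ∉ U1 ∧ v ∉ U2 ∧ v ∉ U3 ∧ v ∉ U4 ∧ v ≠ x ∧ v = y)

def extremalGraph (U1 U2 U3 U4 : Finset V) : SimpleGraph V :=
  SimpleGraph.fromRel fun v w =>
    ¬ ((v ∈ U1 ∧ w ∈ U4) ∨ (v ∈ U4 ∧ w ∈ U1) ∨ (v ∈ U2 ∧ w ∈ U3) ∨ (v ∈ U3 ∧ w ∈ U2))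

def redGraph (x : V) (U1 U2 U3 U4 : Finset V) : SimpleGraph V :=
  SimpleGraph.fromRel fun v w => v = x ∨ (v ∈ U1 ∧ w ∈ U3) ∨ (v ∈ U2 ∧ w ∈ U4)

def blueGraph (x : V) (U1 U2 U3 U4 : Finset V) : SimpleGraph V :=
  extremalGraph U1 U2 U3 U4 \ redGraph x U1 U2 U3 U4

theorem redGraph_le_extremalGraph (hP : IsBlockPartition U1 U2 U3 U4 x y) :
    redGraph x U1 U2 U3 U4 ≤ extremalGraph U1 U2 U3 U4 := by
  intro v w hvw
  have := hP v
  have := hP w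
  simp only [redGraph, extremalGraph, SimpleGraph.fromRel_adj] at *
  grind

variable [DecidableEq V]

theorem isBlockPartition_of_pairwise_disjoint [Fintype V] (hxy : x ≠ y)
    (hdisj : ([U1, U2, U3, U4, {x, y}] : List (Finset V)).Pairwise Disjoint)
    (hcover : U1 ∪ U2 ∪ U3 ∪ U4 ∪ {x, y} = univ) : IsBlockPartition U1 U2 U3 U4 x y := by
  intro v
  simp only [List.pairwise_cons, List.mem_cons, List.not_mem_nil, forall_eq_or_imp, or_false,
    forall_eq, List.Pairwise.nil, and_true, disjoint_left] at hdisj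
  have hv : v ∈ U1 ∪ U2 ∪ U3 ∪ U4 ∪ {x, y} := hcover ▸ mem_univ v
  simp only [mem_union, mem_insert, mem_singleton] at hv
  rcases hv with ((((h | h) | h) | h) | rfl | rfl) <;> grind

theorem card_add_card_add_card_add_card_add_two [Fintype V] (hxy : x ≠ y)
    (hdisj : ([U1, U2, U3, U4, {x, y}] : List (Finset V)).Pairwise Disjoint)
    (hcover : U1 ∪ U2 ∪ U3 ∪ U4 ∪ {x, y} = univ) :
    #U1 + #U2 + #U3 + #U4 + 2 = Fintype.card V := by
  simp only [List.pairwise_cons, List.mem_cons, List.not_mem_nil, forall_eq_or_imp, or_false,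
    forall_eq, List.Pairwise.nil, and_true, disjoint_insert_right, disjoint_singleton_right]
    at hdisj
  rw [← card_univ, ← hcover, card_union_of_disjoint, card_union_of_disjoint,
    card_union_of_disjoint, card_union_of_disjoint hdisj.1.1, card_pair hxy]
  all_goals simp_all [disjoint_union_left]

def nonNeighborBlock (U1 U2 U3 U4 : Finset V) (v : V) : Finset V :=
  if v ∈ U1 then U4 else if v ∈ U2 then U3 else if v ∈ U3 then U2 else if v ∈ U4 then U1 else ∅

theorem extremalGraph_adj_iff (hP : IsBlockPartition U1 U2 U3 U4 x y) (v w : V) :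
    (extremalGraph U1 U2 U3 U4).Adj v w ↔ w ≠ v ∧ w ∉ nonNeighborBlock U1 U2 U3 U4 v := by
  simp only [extremalGraph, nonNeighborBlock, SimpleGraph.fromRel_adj]
  rcases hP v with h | h | h | h | h | h <;> rcases hP w with h' | h' | h' | h' | h' | h' <;>
    simp_all <;> grind

theorem notMem_nonNeighborBlock_self (hP : IsBlockPartition U1 U2 U3 U4 x y) (v : V) :
    v ∉ nonNeighborBlock U1 U2 U3 U4 v := by
  have := hP v
  unfold nonNeighborBlock
  split_ifs <;> grind

theorem card_nonNeighborBlock_le (h12 : #U1 ≤ #U2) (h23 : #U2 ≤ #U3) (h34 : #U3 ≤ #U4) (v : V) :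
    #(nonNeighborBlock U1 U2 U3 U4 v) ≤ #U4 := by
  unfold nonNeighborBlock
  split_ifs <;> first | omega | simp

theorem degree_extremalGraph [Fintype V] [DecidableRel (extremalGraph U1 U2 U3 U4).Adj]
    (hP : IsBlockPartition U1 U2 U3 U4 x y) (v : V) :
    (extremalGraph U1 U2 U3 U4).degree v =
      Fintype.card V - 1 - #(nonNeighborBlock U1 U2 U3 U4 v) :=
  SimpleGraph.degree_eq_card_sub_card_of_adj_iff
    (notMem_nonNeighborBlock_self hP v) (extremalGraph_adj_iff hP v)

theorem minDegree_extremalGraph [Fintype V] [DecidableRel (extremalGraph U1 U2 U3 U4).Adj]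
    (hP : IsBlockPartition U1 U2 U3 U4 x y) (h12 : #U1 ≤ #U2) (h23 : #U2 ≤ #U3)
    (h34 : #U3 ≤ #U4) (hU1 : U1.Nonempty) :
    (extremalGraph U1 U2 U3 U4).minDegree = Fintype.card V - 1 - #U4 := by
  obtain ⟨v₀, hv₀⟩ := hU1
  have : Nonempty V := ⟨v₀⟩
  refine le_antisymm ?_ (SimpleGraph.le_minDegree_of_forall_le_degree _ _ fun v => ?_)
  · simpa [degree_extremalGraph hP, nonNeighborBlock, hv₀] using
      SimpleGraph.minDegree_le_degree (extremalGraph U1 U2 U3 U4) v₀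
  · rw [degree_extremalGraph hP]
    have := card_nonNeighborBlock_le h12 h23 h34 v
    omega

theorem redGraph_cycle_length_le (hP : IsBlockPartition U1 U2 U3 U4 x y) {m : ℕ}
    (h13 : #U1 + #U3 ≤ m) (h24 : #U2 + #U4 ≤ m) (hm : 1 ≤ m) {u : V}
    {c : (redGraph x U1 U2 U3 U4).Walk u u} (hc : c.IsCycle) : c.length ≤ m + 1 := by
  have closed : ∀ S ∈ [U1 ∪ U3, U2 ∪ U4, {y}], ∀ a ∈ S, ∀ b,
      (redGraph x U1 U2 U3 U4).Adj a b → b = x ∨ b ∈ S := by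
    intro S hS a ha b hab
    have := hP a
    have := hP b
    simp only [List.mem_cons, List.not_mem_nil, or_false] at hS
    simp only [redGraph, SimpleGraph.fromRel_adj] at hab
    rcases hS with rfl | rfl | rfl <;> simp only [mem_union, mem_singleton] at * <;> grind
  refine hc.length_le_of_closed (x := x) fun v hv => ?_
  rcases hP v with h | h | h | h | h | h
  · exact ⟨_, by simp [h], (card_union_le _ _).trans h13, closed _ (by simp)⟩
  · exact ⟨_, by simp [h], (card_union_le _ _).trans h24, closed _ (by simp)⟩
  · exact ⟨_, by simp [h], (card_union_le _ _).trans h13, closed _ (by simp)⟩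
  · exact ⟨_, by simp [h], (card_union_le _ _).trans h24, closed _ (by simp)⟩
  · exact absurd h.2.2.2.2.1 hv
  · exact ⟨{y}, by simp [h], by simpa using hm, closed _ (by simp)⟩

theorem blueGraph_cycle_length_le (hP : IsBlockPartition U1 U2 U3 U4 x y) {m : ℕ}
    (h12 : #U1 + #U2 ≤ m) (h34 : #U3 + #U4 ≤ m) (hm : 1 ≤ m) {u : V}
    {c : (blueGraph x U1 U2 U3 U4).Walk u u} (hc : c.IsCycle) : c.length ≤ m + 1 := by
  have closed : ∀ S ∈ [U1 ∪ U2, U3 ∪ U4, {x}], ∀ a ∈ S, ∀ b,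
      (blueGraph x U1 U2 U3 U4).Adj a b → b = y ∨ b ∈ S := by
    intro S hS a ha b hab
    have := hP a
    have := hP b
    simp only [List.mem_cons, List.not_mem_nil, or_false] at hS
    simp only [blueGraph, SimpleGraph.sdiff_adj, redGraph, extremalGraph,
      SimpleGraph.fromRel_adj] at hab
    rcases hS with rfl | rfl | rfl <;> simp only [mem_union, mem_singleton] at * <;> grind
  refine hc.length_le_of_closed (x := y) fun v hv => ?_
  rcases hP v with h | h | h | h | h | h
  · exact ⟨_, by simp [h], (card_union_le _ _).trans h12, closed _ (by simp)⟩
  · exact ⟨_, by simp [h], (card_union_le _ _).trans h12, closed _ (by simp)⟩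
  · exact ⟨_, by simp [h], (card_union_le _ _).trans h34, closed _ (by simp)⟩
  · exact ⟨_, by simp [h], (card_union_le _ _).trans h34, closed _ (by simp)⟩
  · exact ⟨{x}, by simp [h], by simpa using hm, closed _ (by simp)⟩
  · exact absurd h.2.2.2.2.2 hv

end Construction

/- Note on natural-number arithmetic: `⌈(n-2)/4⌉ = (n+1)/4` and
`⌊(3n-2)/4⌋ = (3*n-2)/4`, and with `n = 3t + r`, `2t + r = 2*(n/3) + n % 3`. -/
theorem stmt2 (n : ℕ) (hn : 8 ≤ n) (V : Type) [Fintype V] [DecidableEq V]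
    (hcard : Fintype.card V = n)
    (U1 U2 U3 U4 : Finset V) (x y : V) (hxy : x ≠ y)
    (hdisj : ([U1, U2, U3, U4, {x, y}] : List (Finset V)).Pairwise Disjoint)
    (hcover : U1 ∪ U2 ∪ U3 ∪ U4 ∪ {x, y} = (Finset.univ : Finset V))
    (hsize1 : (n - 2) / 4 ≤ U1.card) (h12 : U1.card ≤ U2.card)
    (h23 : U2.card ≤ U3.card) (h34 : U3.card ≤ U4.card)
    (hsize4 : U4.card ≤ (n + 1) / 4) :
    -- `G` is `K_n` minus all edges between `U1` and `U4` and between `U2` and `U3`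
    let G : SimpleGraph V :=
      SimpleGraph.fromRel (fun v w =>
        ¬ ((v ∈ U1 ∧ w ∈ U4) ∨ (v ∈ U4 ∧ w ∈ U1) ∨
           (v ∈ U2 ∧ w ∈ U3) ∨ (v ∈ U3 ∧ w ∈ U2)))
    -- (a) the minimum degree of `G` equals `n - 1 - ⌈(n-2)/4⌉ = ⌊(3n-2)/4⌋`
    (@SimpleGraph.minDegree V G _ (Classical.decRel _) = n - 1 - (n + 1) / 4 ∧
      n - 1 - (n + 1) / 4 = (3 * n - 2) / 4) ∧
    -- (b) some 2-edge-coloring of `G` has monochromatic circumference at most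
    -- `2⌈(n-2)/4⌉ + 1`, which is strictly less than `2⌊n/3⌋ + (n mod 3)`
    (∃ R B : SimpleGraph V, R ⊔ B = G ∧
      (∀ ℓ : ℕ, (hasCycleLength R ℓ ∨ hasCycleLength B ℓ) →
        ℓ ≤ 2 * ((n + 1) / 4) + 1) ∧
      2 * ((n + 1) / 4) + 1 < 2 * (n / 3) + n % 3) := by
  intro G
  have hP := isBlockPartition_of_pairwise_disjoint hxy hdisj hcover
  have hsum := card_add_card_add_card_add_card_add_two hxy hdisj hcover
  have hU4 : #U4 = (n + 1) / 4 := by omega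
  refine ⟨⟨?_, by omega⟩, redGraph x U1 U2 U3 U4, blueGraph x U1 U2 U3 U4,
    sup_sdiff_cancel_right (redGraph_le_extremalGraph hP), ?_, by omega⟩
  · let := Classical.decRel (extremalGraph U1 U2 U3 U4).Adj
    exact (minDegree_extremalGraph hP h12 h23 h34 (card_pos.1 (by omega))).trans
      (by rw [hcard, hU4])
  · rintro ℓ (⟨u, c, hc, rfl⟩ | ⟨u, c, hc, rfl⟩)
    · exact redGraph_cycle_length_le hP (by omega) (by omega) (by omega) hc
    · exact blueGraph_cycle_length_le hP (by omega) (by omega) (by omega) hc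
end

section
/- Let H be a bipartite graph with parts {u_1,…,u_m} and {v_1,…,v_m}, with degrees sorted so that deg(u_1) ≤ … ≤ deg(u_m) and deg(v_1) ≤ … ≤ deg(v_m). Let i be the smallest index with deg(u_i) ≤ i + 1 and j the smallest index with deg(v_j) ≤ j + 1 (when such indices exist). If deg(u_i) + deg(v_j) ≥ m + 2, then H is Hamiltonian bi-connected: for every pair of vertices a in the first part and b in the second part, H has a Hamiltonian path with endpoints a and b. -/
/-!
Bondy–Chvátal closure. Suppose there is no Hamiltonian path from `a` to `b`, and enlarge `G`
inside the complete bipartite graph to a maximal graph `H` that still has none. For a non-edge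
`xy` of `H`, the graph `H + xy` has such a path; if `x ~ f i` and `y ~ f (i + 1)` for some
position `i` on it, reversing a segment gives a path avoiding `xy`. So the shifted neighbourhood
of `x` and the neighbourhood of `y` are disjoint sets among the `m + 1` positions that hold a
vertex of the side of `x` or lie just past the end, whence `deg x + deg y ≤ m + 1`.
Take a non-edge `xy` of `H` of maximal degree sum `s + t`: the `m - s ≥ t - 1` non-neighbours
of `x` have degree at most `t`, and symmetrically, so the sorted degree sequences force indices
`i`, `j` as in the hypothesis with `deg u_i + deg v_j ≤ s + t ≤ m + 1`.
-/

open Finset Fintype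

namespace SimpleGraph

section Enumeration

variable {V : Type*} [Fintype V] {G : SimpleGraph V} {f : ℕ → V} {a b : V}

lemma image_range_eq_univ_of_injOn [DecidableEq V] (hf : Set.InjOn f (Set.Iio (card V))) :
    (range (card V)).image f = univ :=
  eq_univ_of_card _ <| by rw [card_image_of_injOn (by rwa [coe_range]), card_range]

lemma card_filter_range_comp_of_injOn (hf : Set.InjOn f (Set.Iio (card V))) (P : V → Prop)
    [DecidablePred P] : #{i ∈ range (card V) | P (f i)} = #{v | P v} := by
  classical
  rw [← image_range_eq_univ_of_injOn hf, filter_image,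
    card_image_of_injOn (hf.mono (by simp +contextual [Set.subset_def]))]

lemma exists_isHamiltonian_of_injOn [DecidableEq V] (hf : Set.InjOn f (Set.Iio (card V)))
    (hadj : ∀ i, i + 1 < card V → G.Adj (f i) (f (i + 1))) (ha : f 0 = a)
    (hb : f (card V - 1) = b) : ∃ p : G.Walk a b, p.IsHamiltonian := by
  have hV : 0 < card V := card_pos_iff.2 ⟨a⟩
  set l := (List.range (card V)).map f
  have hl : l ≠ [] := by simp [l]; omega
  have hchain : l.IsChain G.Adj := by
    rw [List.isChain_map, List.isChain_range]
    exact fun i hi => hadj i (by omega)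
  refine ⟨(Walk.ofSupport l hl hchain).copy (by simp [l, ha]) (by simp [l, List.getLast_map, hb]),
    ?_⟩
  rw [Walk.isHamiltonian_iff_isPath_and_length_eq, Walk.isPath_copy, Walk.length_copy,
    Walk.isPath_def, Walk.support_ofSupport, Walk.length_ofSupport]
  exact ⟨(List.nodup_range).map_on fun i hi j hj h => hf (by simpa using hi) (by simpa using hj) h,
    by simp [l]⟩

/-- Reversing the block `f s, …, f (t - 1)` trades the edges at positions `s - 1` and `t - 1`
for `f (s - 1) f (t - 1)` and `f s f t`. -/
lemma exists_isHamiltonian_of_reverse_block [DecidableEq V] (hf : Set.InjOn f (Set.Iio (card V)))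
    {s t : ℕ} (hs : 0 < s) (hst : s < t) (ht : t < card V)
    (hadj : ∀ i, i + 1 < card V → i ≠ s - 1 → i ≠ t - 1 → G.Adj (f i) (f (i + 1)))
    (h₁ : G.Adj (f (s - 1)) (f (t - 1))) (h₂ : G.Adj (f s) (f t)) (ha : f 0 = a)
    (hb : f (card V - 1) = b) : ∃ p : G.Walk a b, p.IsHamiltonian := by
  set r : ℕ → ℕ := fun i => if s ≤ i ∧ i < t then s + t - 1 - i else i with hr
  have hrinj : Set.InjOn r (Set.Iio (card V)) := fun i _ j _ h => by
    simp only [hr] at h; split_ifs at h <;> omega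
  refine exists_isHamiltonian_of_injOn (f := f ∘ r) (hf.comp hrinj fun i hi => ?_) (fun i hi => ?_)
    (by simp [hr, hs.ne', ha]) (by simp only [Function.comp, hr]; rwa [if_neg (by omega)])
  · simp only [hr, Set.mem_Iio] at hi ⊢; split_ifs <;> omega
  simp only [Function.comp, hr]
  by_cases h1 : i + 1 = s
  · rw [if_neg (by omega), if_pos (by omega)]
    convert h₁ using 2 <;> omega
  by_cases h2 : i + 1 = t
  · rw [if_pos (by omega), if_neg (by omega)]
    convert h₂ using 2; omega
  split_ifs with h3 h4 h4
  · convert (hadj (s + t - 1 - (i + 1)) (by omega) (by omega) (by omega)).symm using 2; omega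
  · omega
  · omega
  · exact hadj i hi (by omega) (by omega)

lemma not_adj_and_adj_of_forall_not_isHamiltonian [DecidableEq V]
    (hf : Set.InjOn f (Set.Iio (card V))) {k : ℕ}
    (hadj : ∀ i, i + 1 < card V → i ≠ k → G.Adj (f i) (f (i + 1))) (ha : f 0 = a)
    (hb : f (card V - 1) = b) (hG : ∀ p : G.Walk a b, ¬ p.IsHamiltonian) {i : ℕ}
    (hi : i + 1 < card V) : ¬ (G.Adj (f k) (f i) ∧ G.Adj (f (k + 1)) (f (i + 1))) := by
  rintro ⟨h₁, h₂⟩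
  have hgap : ¬ G.Adj (f k) (f (k + 1)) := fun h => by
    obtain ⟨p, hp⟩ := exists_isHamiltonian_of_injOn hf (fun j hj => by
      rcases eq_or_ne j k with rfl | hjk
      exacts [h, hadj j hj hjk]) ha hb
    exact hG p hp
  have hk : k + 1 < card V := by
    by_contra hk
    obtain ⟨p, hp⟩ := exists_isHamiltonian_of_injOn hf (fun j hj => hadj j hj (by omega)) ha hb
    exact hG p hp
  rcases lt_trichotomy (i + 1) k with hik | rfl | hik
  · obtain ⟨p, hp⟩ := exists_isHamiltonian_of_reverse_block hf (s := i + 1) (t := k + 1)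
      (by omega) (by omega) hk (fun j hj _ _ => hadj j hj (by omega))
      (by simpa using h₁.symm) h₂.symm ha hb
    exact hG p hp
  · exact hgap h₂.symm
  rcases lt_trichotomy i (k + 1) with hik' | rfl | hik'
  · obtain rfl : i = k := by omega
    exact h₁.ne rfl
  · exact hgap h₁
  · obtain ⟨p, hp⟩ := exists_isHamiltonian_of_reverse_block hf (s := k + 1) (t := i + 1)
      (by omega) (by omega) hi (fun j hj _ _ => hadj j hj (by omega))
      (by simpa using h₁) h₂ ha hb
    exact hG p hp

end Enumeration

section HamiltonianWalk

variable {V : Type*} [Fintype V] [DecidableEq V] {G : SimpleGraph V} {a b : V}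

lemma Walk.IsHamiltonian.injOn_getVert {p : G.Walk a b} (hp : p.IsHamiltonian) :
    Set.InjOn p.getVert (Set.Iio (card V)) := by
  have hV : 0 < card V := card_pos_iff.2 ⟨a⟩
  refine hp.isPath.getVert_injOn.mono fun i hi => ?_
  simp only [Set.mem_Iio, Set.mem_ofPred_eq, hp.length_eq] at hi ⊢
  omega

lemma Walk.IsHamiltonian.getVert_card_sub_one {p : G.Walk a b} (hp : p.IsHamiltonian) :
    p.getVert (card V - 1) = b := by
  rw [← hp.length_eq, p.getVert_length]

lemma Walk.IsHamiltonian.adj_getVert_succ {p : G.Walk a b} (hp : p.IsHamiltonian) {i : ℕ}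
    (hi : i + 1 < card V) : G.Adj (p.getVert i) (p.getVert (i + 1)) :=
  p.adj_getVert_succ (by rw [hp.length_eq]; omega)

lemma exists_gap_of_isHamiltonian_sup_edge {u v : V} {p : (G ⊔ edge u v).Walk a b}
    (hp : p.IsHamiltonian) (hG : ∀ q : G.Walk a b, ¬ q.IsHamiltonian) :
    ∃ k, k + 1 < card V ∧ s(p.getVert k, p.getVert (k + 1)) = s(u, v) ∧
      ∀ i, i + 1 < card V → i ≠ k → G.Adj (p.getVert i) (p.getVert (i + 1)) := by
  have hedge : ∀ i, i + 1 < card V → ¬ G.Adj (p.getVert i) (p.getVert (i + 1)) →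
      s(p.getVert i, p.getVert (i + 1)) = s(u, v) := fun i hi hGi => by
    have := hp.adj_getVert_succ hi
    rw [sup_adj, edge_adj] at this
    exact Sym2.eq_iff.2 ((this.resolve_left hGi).1)
  obtain ⟨k, hk, hgap⟩ : ∃ k, k + 1 < card V ∧ ¬ G.Adj (p.getVert k) (p.getVert (k + 1)) := by
    by_contra! h
    obtain ⟨q, hq⟩ := exists_isHamiltonian_of_injOn hp.injOn_getVert h p.getVert_zero
      hp.getVert_card_sub_one
    exact hG q hq
  refine ⟨k, hk, hedge k hk hgap, fun i hi hik => by_contra fun hGi => hik ?_⟩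
  have hf := hp.injOn_getVert
  rcases Sym2.eq_iff.1 ((hedge i hi hGi).trans (hedge k hk hgap).symm) with ⟨h, -⟩ | ⟨h, h'⟩
  · exact hf (Set.mem_Iio.2 (by omega)) (Set.mem_Iio.2 (by omega)) h
  · have := hf (Set.mem_Iio.2 (by omega)) (Set.mem_Iio.2 (by omega)) h
    have := hf (Set.mem_Iio.2 (by omega)) (Set.mem_Iio.2 (by omega)) h'
    omega

end HamiltonianWalk

section Bipartite

variable {α : Type*} {G : SimpleGraph (α ⊕ α)}

lemma isLeft_eq_not_of_adj (hG : G ≤ completeBipartiteGraph α α) {u v : α ⊕ α} (h : G.Adj u v) :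
    v.isLeft = !u.isLeft := by
  have := hG h
  cases u <;> cases v <;> simp_all

variable [Fintype α]

lemma card_filter_isLeft_eq (b : Bool) : #{v : α ⊕ α | v.isLeft = b} = card α := by
  cases b
  · rw [show ({v | v.isLeft = false} : Finset (α ⊕ α)) = univ.map .inr by
      ext v; cases v <;> simp, card_map, card_univ]
  · rw [show ({v | v.isLeft = true} : Finset (α ⊕ α)) = univ.map .inl by
      ext v; cases v <;> simp, card_map, card_univ]

/-- The positions `{i + 1 | u ~ f i}` and `{i | w ~ f i}` are disjoint, and all lie on the side
of `u` or at the end `card (α ⊕ α)` of the path. -/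
lemma degree_add_degree_le_of_forall_not_adj_and_adj [DecidableRel G.Adj] {f : ℕ → α ⊕ α}
    (hG : G ≤ completeBipartiteGraph α α) (hf : Set.InjOn f (Set.Iio (card (α ⊕ α))))
    (halt : ∀ i, i + 1 < card (α ⊕ α) → (f (i + 1)).isLeft = !(f i).isLeft)
    {u w : α ⊕ α} (huw : w.isLeft = !u.isLeft)
    (hcross : ∀ i, i + 1 < card (α ⊕ α) → ¬ (G.Adj u (f i) ∧ G.Adj w (f (i + 1)))) :
    G.degree u + G.degree w ≤ card α + 1 := by
  have hdeg : ∀ v, G.degree v = #{i ∈ range (card (α ⊕ α)) | G.Adj v (f i)} := fun v => by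
    rw [← card_neighborFinset_eq_degree, neighborFinset_eq_filter,
      card_filter_range_comp_of_injOn hf]
  set P := {i ∈ range (card (α ⊕ α)) | G.Adj u (f i)}.image (· + 1)
  set Q := {i ∈ range (card (α ⊕ α)) | G.Adj w (f i)}
  have hP : #P = G.degree u := by rw [card_image_of_injective _ (add_left_injective 1), hdeg]
  have hdisj : Disjoint P Q := by
    rw [Finset.disjoint_left]
    simp only [P, Q, mem_image, mem_filter, mem_range]
    rintro _ ⟨i, ⟨-, hi⟩, rfl⟩ ⟨hi', hi''⟩
    exact hcross i hi' ⟨hi, hi''⟩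
  have hsub : P ∪ Q ⊆
      insert (card (α ⊕ α)) {i ∈ range (card (α ⊕ α)) | (f i).isLeft = u.isLeft} := by
    intro j hj
    simp only [P, Q, mem_union, mem_image, mem_filter, mem_range, mem_insert] at hj ⊢
    rcases hj with ⟨i, ⟨hi, hadj⟩, rfl⟩ | ⟨hj, hadj⟩
    · rcases (Nat.succ_le_of_lt hi).eq_or_lt with h | h
      · exact Or.inl h
      · exact Or.inr ⟨h, by rw [halt i h, isLeft_eq_not_of_adj hG hadj, Bool.not_not]⟩
    · exact Or.inr ⟨hj, by rw [isLeft_eq_not_of_adj hG hadj, huw, Bool.not_not]⟩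
  calc G.degree u + G.degree w = #(P ∪ Q) := by rw [card_union_of_disjoint hdisj, hP, hdeg w]
    _ ≤ #{i ∈ range (card (α ⊕ α)) | (f i).isLeft = u.isLeft} + 1 :=
      (card_le_card hsub).trans (card_insert_le _ _)
    _ = card α + 1 := by
      rw [card_filter_range_comp_of_injOn hf (fun v => v.isLeft = u.isLeft), card_filter_isLeft_eq]

variable [DecidableEq α]

lemma degree_add_degree_le_of_isHamiltonian_sup_edge [DecidableRel G.Adj]
    (hG : G ≤ completeBipartiteGraph α α) {a b : α ⊕ α} (hno : ∀ q : G.Walk a b, ¬ q.IsHamiltonian)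
    {x y : α} {p : (G ⊔ edge (.inl x) (.inr y)).Walk a b} (hp : p.IsHamiltonian) :
    G.degree (.inl x) + G.degree (.inr y) ≤ card α + 1 := by
  obtain ⟨k, hk, hxy, hadj⟩ := exists_gap_of_isHamiltonian_sup_edge hp hno
  have hK : G ⊔ edge (.inl x) (.inr y) ≤ completeBipartiteGraph α α :=
    sup_le hG ((edge_le_iff _).2 (Or.inr (by simp)))
  have key := degree_add_degree_le_of_forall_not_adj_and_adj hG hp.injOn_getVert
    (fun i hi => isLeft_eq_not_of_adj hK (hp.adj_getVert_succ hi))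
    (isLeft_eq_not_of_adj hK (hp.adj_getVert_succ hk))
    (fun i hi => not_adj_and_adj_of_forall_not_isHamiltonian hp.injOn_getVert hadj
      p.getVert_zero hp.getVert_card_sub_one hno hi)
  rcases Sym2.eq_iff.1 hxy with ⟨h₁, h₂⟩ | ⟨h₁, h₂⟩
  · rwa [h₁, h₂] at key
  · rwa [h₁, h₂, add_comm] at key

lemma exists_injOn_Iio_card_apply_eq {k : ℕ} (hk : k < card α) (a : α) :
    ∃ L : ℕ → α, Set.InjOn L (Set.Iio (card α)) ∧ L k = a := by
  set e := (equivFin α).symm.trans (Equiv.swap ((equivFin α).symm ⟨k, hk⟩) a)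
  refine ⟨fun i => if h : i < card α then e ⟨i, h⟩ else a, fun i hi j hj h => ?_,
    by simp [e, hk]⟩
  simp only [Set.mem_Iio] at hi hj
  simpa [hi, hj] using h

lemma exists_isHamiltonian_completeBipartiteGraph (a b : α) :
    ∃ p : (completeBipartiteGraph α α).Walk (.inl a) (.inr b), p.IsHamiltonian := by
  have hα : 0 < card α := card_pos_iff.2 ⟨a⟩
  obtain ⟨L, hL, hLa⟩ := exists_injOn_Iio_card_apply_eq hα a
  obtain ⟨R, hR, hRb⟩ := exists_injOn_Iio_card_apply_eq (Nat.sub_lt hα one_pos) b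
  have hcard : card (α ⊕ α) = 2 * card α := by rw [card_sum]; ring
  refine exists_isHamiltonian_of_injOn
    (f := fun i => if i % 2 = 0 then .inl (L (i / 2)) else .inr (R (i / 2)))
    (fun i hi j hj h => ?_) (fun i hi => ?_) (by simp [hLa]) ?_
  · simp only [Set.mem_Iio, hcard] at hi hj
    dsimp only at h
    split_ifs at h <;> simp only [Sum.inl.injEq, Sum.inr.injEq] at h
    · have := hL (Set.mem_Iio.2 (by omega)) (Set.mem_Iio.2 (by omega)) h; omega
    · have := hR (Set.mem_Iio.2 (by omega)) (Set.mem_Iio.2 (by omega)) h; omega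
  · simp only [completeBipartiteGraph_adj]
    split_ifs <;> first | omega | simp
  · rw [hcard, if_neg (by omega), show (2 * card α - 1) / 2 = card α - 1 by omega, hRb]

lemma degree_add_degree_le_of_maximal {a b : α ⊕ α} {H : SimpleGraph (α ⊕ α)}
    [DecidableRel H.Adj]
    (hH : Maximal (fun H : SimpleGraph (α ⊕ α) => H ≤ completeBipartiteGraph α α ∧
      ∀ q : H.Walk a b, ¬ q.IsHamiltonian) H) {x y : α} (hxy : ¬ H.Adj (.inl x) (.inr y)) :
    H.degree (.inl x) + H.degree (.inr y) ≤ card α + 1 := by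
  have hK : H ⊔ edge (.inl x) (.inr y) ≤ completeBipartiteGraph α α :=
    sup_le hH.1.1 ((edge_le_iff _).2 (Or.inr (by simp)))
  obtain ⟨p, hp⟩ : ∃ p : (H ⊔ edge (.inl x) (.inr y)).Walk a b, p.IsHamiltonian := by
    by_contra! hno
    refine hxy (hH.2 ⟨hK, hno⟩ le_sup_left (Or.inr ?_))
    simp [edge_adj]
  exact degree_add_degree_le_of_isHamiltonian_sup_edge hH.1.1 hH.1.2 hp

lemma exists_not_adj_of_forall_not_isHamiltonian {a b : α} {H : SimpleGraph (α ⊕ α)}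
    (hH : ∀ q : H.Walk (.inl a) (.inr b), ¬ q.IsHamiltonian) :
    ∃ x y, ¬ H.Adj (.inl x) (.inr y) := by
  by_contra! hall
  obtain ⟨p, hp⟩ := exists_isHamiltonian_completeBipartiteGraph a b
  refine hH (p.mapLe fun u v huv => ?_) fun v => by
    rw [Walk.support_mapLe_eq_support]; exact hp v
  rcases u with x | y <;> rcases v with x' | y' <;> simp at huv
  exacts [hall x y', (hall x' y).symm]

end Bipartite

section DegreeSequence

lemma card_sub_degree_le_card_filter {V ι : Type*} [Fintype V] [Fintype ι] {G H : SimpleGraph V}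
    [DecidableRel G.Adj] [DecidableRel H.Adj] (hGH : G ≤ H) {g : ι → V} (hg : Function.Injective g)
    (u : V) {t : ℕ} (ht : ∀ i, ¬ H.Adj u (g i) → H.degree (g i) ≤ t) :
    card ι - H.degree u ≤ #{i | G.degree (g i) ≤ t} := by
  have hnbr : #{i | H.Adj u (g i)} ≤ H.degree u := by
    rw [← card_neighborFinset_eq_degree]
    exact card_le_card_of_injOn g (fun i hi => by simpa using hi) hg.injOn
  calc card ι - H.degree u ≤ card ι - #{i | H.Adj u (g i)} := by omega
    _ = #{i | ¬ H.Adj u (g i)} := by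
      rw [← card_univ, ← card_filter_add_card_filter_not (fun i => H.Adj u (g i))]
      omega
    _ ≤ #{i | G.degree (g i) ≤ t} := card_le_card fun i hi => by
      simp only [mem_filter, mem_univ, true_and] at hi ⊢
      exact (degree_le_of_le hGH).trans (ht i hi)

variable {α : Type*} [Fintype α] {G H : SimpleGraph (α ⊕ α)} [DecidableRel G.Adj]
  [DecidableRel H.Adj]

lemma exists_degree_thresholds (hGH : G ≤ H)
    (hH : ∀ x y, ¬ H.Adj (.inl x) (.inr y) → H.degree (.inl x) + H.degree (.inr y) ≤ card α + 1)
    (hne : ∃ x y, ¬ H.Adj (.inl x) (.inr y)) :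
    ∃ s t, s + t ≤ card α + 1 ∧
      (∃ x, G.degree (.inl x) ≤ s) ∧ s ≤ #{x | G.degree (.inl x) ≤ s} + 1 ∧
      (∃ y, G.degree (.inr y) ≤ t) ∧ t ≤ #{y | G.degree (.inr y) ≤ t} + 1 := by
  obtain ⟨x₀, y₀, hxy₀⟩ := hne
  obtain ⟨⟨x, y⟩, hxy, hmax⟩ := exists_max_image {p : α × α | ¬ H.Adj (.inl p.1) (.inr p.2)}
    (fun p => H.degree (.inl p.1) + H.degree (.inr p.2)) ⟨(x₀, y₀), by simpa using hxy₀⟩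
  simp only [mem_filter, mem_univ, true_and] at hxy hmax
  have hst := hH x y hxy
  have hs := card_sub_degree_le_card_filter hGH Sum.inl_injective (.inr y)
    (t := H.degree (.inl x)) fun i hi => by
      have := hmax (i, y) fun h => hi h.symm
      dsimp only at this
      omega
  have ht := card_sub_degree_le_card_filter hGH Sum.inr_injective (.inl x)
    (t := H.degree (.inr y)) fun j hj => by
      have := hmax (x, j) hj
      dsimp only at this
      omega
  exact ⟨_, _, hst, ⟨x, degree_le_of_le hGH⟩, by omega, ⟨y, degree_le_of_le hGH⟩, by omega⟩

lemma exists_first_le_add_two {m : ℕ} {d : Fin m → ℕ} (hd : Monotone d) {t : ℕ} {y : Fin m}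
    (hy : d y ≤ t) (ht : t ≤ #{j | d j ≤ t} + 1) :
    ∃ j, d j ≤ j + 2 ∧ (∀ j' < j, ¬ d j' ≤ j' + 2) ∧ d j ≤ t := by
  have hS : ({j | d j ≤ t} : Finset (Fin m)).Nonempty := ⟨y, by simpa using hy⟩
  set c := ({j | d j ≤ t} : Finset (Fin m)).max' hS
  have hc : d c ≤ t := by simpa using max'_mem _ hS
  have hcard : #{j | d j ≤ t} ≤ c + 1 :=
    (card_le_card fun j hj => mem_Iic.2 (le_max' _ j hj)).trans (Fin.card_Iic c).le
  have hc₂ : d c ≤ c + 2 := by omega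
  obtain ⟨j, hj, hmin⟩ := wellFounded_lt.has_min {j | d j ≤ j + 2} ⟨c, hc₂⟩
  exact ⟨j, hj, fun j' hj' h => hmin j' h hj', (hd (not_lt.1 (hmin c hc₂))).trans hc⟩

end DegreeSequence

end SimpleGraph

open SimpleGraph

theorem stmt7_general (m : ℕ) (G : SimpleGraph (Fin m ⊕ Fin m))
    [DecidableRel G.Adj]
    (hbip : ∀ a b : Fin m ⊕ Fin m, G.Adj a b →
      (a.isLeft ∧ b.isRight) ∨ (a.isRight ∧ b.isLeft))
    (hmonoU : Monotone fun i : Fin m => G.degree (Sum.inl i))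
    (hmonoV : Monotone fun j : Fin m => G.degree (Sum.inr j))
    -- For the smallest i with deg(u_i) ≤ i + 1 and smallest j with
    -- deg(v_j) ≤ j + 1 (1-indexed; `i.val + 2` is `i + 1` in 1-indexing):
    -- deg(u_i) + deg(v_j) ≥ m + 2.
    (hcond : ∀ i j : Fin m,
      G.degree (Sum.inl i) ≤ i.val + 2 →
      (∀ i' : Fin m, i' < i → ¬ G.degree (Sum.inl i') ≤ i'.val + 2) →
      G.degree (Sum.inr j) ≤ j.val + 2 →
      (∀ j' : Fin m, j' < j → ¬ G.degree (Sum.inr j') ≤ j'.val + 2) →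
      m + 2 ≤ G.degree (Sum.inl i) + G.degree (Sum.inr j)) :
    -- Hamiltonian bi-connected: between any vertex of the first part and any
    -- vertex of the second part there is a Hamiltonian path (2m - 1 edges).
    ∀ a b : Fin m, ∃ p : G.Walk (Sum.inl a) (Sum.inr b),
      p.IsPath ∧ p.length = 2 * m - 1 := by
  intro a b
  classical
  by_contra hno
  have hG : ∀ p : G.Walk (.inl a) (.inr b), ¬ p.IsHamiltonian := fun p hp =>
    hno ⟨p, hp.isPath, by rw [hp.length_eq, Fintype.card_sum, Fintype.card_fin, two_mul]⟩
  obtain ⟨H, hGH, hH⟩ := Finite.exists_le_maximal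
    (p := fun H => H ≤ completeBipartiteGraph _ _ ∧
      ∀ q : H.Walk (.inl a) (.inr b), ¬ q.IsHamiltonian)
    ⟨fun u v huv => hbip u v huv, hG⟩
  obtain ⟨s, t, hst, ⟨x, hx⟩, hs, ⟨y, hy⟩, ht⟩ := exists_degree_thresholds hGH
    (fun _ _ => degree_add_degree_le_of_maximal hH)
    (exists_not_adj_of_forall_not_isHamiltonian hH.1.2)
  obtain ⟨i, hi, hi_min, his⟩ := exists_first_le_add_two hmonoU hx hs
  obtain ⟨j, hj, hj_min, hjt⟩ := exists_first_le_add_two hmonoV hy ht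
  have := hcond i j hi hi_min hj hj_min
  rw [Fintype.card_fin] at hst
  omega

/-- Berge: a balanced bipartite graph (parts indexed by `Fin m`, degrees sorted
increasingly along each part) satisfying the stated degree condition is
Hamiltonian bi-connected. -/
theorem stmt7 (m : ℕ) (hm : 1 ≤ m) (G : SimpleGraph (Fin m ⊕ Fin m))
    [DecidableRel G.Adj]
    (hbip : ∀ a b : Fin m ⊕ Fin m, G.Adj a b →
      (a.isLeft ∧ b.isRight) ∨ (a.isRight ∧ b.isLeft))
    (hmonoU : Monotone fun i : Fin m => G.degree (Sum.inl i))
    (hmonoV : Monotone fun j : Fin m => G.degree (Sum.inr j))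
    -- For the smallest i with deg(u_i) ≤ i + 1 and smallest j with
    -- deg(v_j) ≤ j + 1 (1-indexed; `i.val + 2` is `i + 1` in 1-indexing):
    -- deg(u_i) + deg(v_j) ≥ m + 2.
    (hcond : ∀ i j : Fin m,
      G.degree (Sum.inl i) ≤ i.val + 2 →
      (∀ i' : Fin m, i' < i → ¬ G.degree (Sum.inl i') ≤ i'.val + 2) →
      G.degree (Sum.inr j) ≤ j.val + 2 →
      (∀ j' : Fin m, j' < j → ¬ G.degree (Sum.inr j') ≤ j'.val + 2) →
      m + 2 ≤ G.degree (Sum.inl i) + G.degree (Sum.inr j)) :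
    -- Hamiltonian bi-connected: between any vertex of the first part and any
    -- vertex of the second part there is a Hamiltonian path (2m - 1 edges).
    ∀ a b : Fin m, ∃ p : G.Walk (Sum.inl a) (Sum.inr b),
      p.IsPath ∧ p.length = 2 * m - 1 :=
  stmt7_general m G hbip hmonoU hmonoV hcond
end

section
/- Let 0 < δ < 1/1000 and n be large. Let H be a bipartite graph with parts A_1 and A_2 where |A_1|, |A_2| ≥ (1/4 - 5δ)n, and suppose every vertex of A_1 is non-adjacent to at most 10δn vertices of A_2 and vice versa. Then: (1) For each odd ℓ with 80δn + 3 ≤ ℓ ≤ (1/2 - 10δ)n - 1 and any x_1 ∈ A_1, x_2 ∈ A_2, there is a path in H from x_1 to x_2 with exactly ℓ edges. (2) For each even ℓ in the same range and any distinct x_1, x_1' ∈ A_1, there is a path in H from x_1 to x_1' with exactly ℓ edges. -/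
/-!
Write `d = ⌊10δn⌋`, so that every vertex misses at most `d` vertices of the other side. For odd
`ℓ = 2s - 1` choose `s`-sets `S ⊆ A₁`, `T ⊆ A₂` containing the endpoints `x ∈ S`, `y ∈ T`; the range
of `ℓ` gives `4d < s`, and it suffices to find a Hamiltonian path from `x` to `y` in `H[S, T]`. For
even `ℓ = 2s` take such a path from `x₁'` to a neighbour `y` of `x₁` avoiding `x₁`, and prepend `x₁`.

Hall's theorem gives a perfect matching `e₀ : S ≃ T` and a bijection `e : S ≃ T` with `e x = y`
that is a matching on `S \ {x}`. Given a permutation `π` of `S` with `u ~ e (π u)` for all `u` (to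
begin with, `π = e⁻¹ ∘ e₀`), the walk `x, e (π x), π x, e (π² x), π² x, …` alternates between these
edges and the matching edges `e v ~ v`; when `π` is a single cycle it covers `S ∪ T` and ends at
`e x = y`. As long as `π` has several cycles, take `a` in a cycle of at most `s / 2` elements: all
but at most `s / 2 + 2d < s` vertices `u` lie outside it and satisfy `a ~ e (π u)` and
`u ~ e (π a)`, and then `π * swap a u` keeps the property while merging the cycles of `a` and `u`.
-/

open Finset

namespace Equiv.Perm

variable {α : Type*} {π : Perm α} {x y : α}

theorem SameCycle.mem_of_mapsTo [Finite α] {s : Set α} (hs : Set.MapsTo π s s) (hx : x ∈ s)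
    (hxy : π.SameCycle x y) : y ∈ s := by
  obtain ⟨k, rfl⟩ := hxy.exists_nat_pow_eq
  rw [coe_pow]
  exact hs.iterate k hx

variable [DecidableEq α] {a u : α}

section Finite

variable [Finite α]

theorem sameCycle_mul_swap_of_not_sameCycle (h : ¬π.SameCycle a u) :
    (π * swap a u).SameCycle a u := by
  set π' := π * swap a u
  -- Otherwise the points of the `π`-cycle of `u` that `π'` joins to `a` are closed under `π`
  -- (which agrees with `π'` off `{a, u}`), and they include `π u = π' a`, hence also `u`.
  by_contra h'
  have hua : ¬π.SameCycle u a := fun h'' => h h''.symm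
  have hmaps : Set.MapsTo π {x | π'.SameCycle a x ∧ π.SameCycle u x}
      {x | π'.SameCycle a x ∧ π.SameCycle u x} := by
    rintro x ⟨hax, hux⟩
    have hxu : x ≠ u := by rintro rfl; exact h' hax
    have hxa : x ≠ a := by rintro rfl; exact hua hux
    have hx : π' x = π x := by simp [π', swap_apply_of_ne_of_ne hxa hxu]
    exact ⟨hx ▸ sameCycle_apply_right.2 hax, sameCycle_apply_right.2 hux⟩
  have hstart : π'.SameCycle a (π u) ∧ π.SameCycle u (π u) := by
    have ha : π' a = π u := by simp [π']
    exact ⟨ha ▸ sameCycle_apply_right.2 .rfl, sameCycle_apply_right.2 .rfl⟩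
  exact h' (SameCycle.mem_of_mapsTo hmaps hstart (sameCycle_apply_left.2 .rfl)).1

theorem sameCycle_mul_swap_apply (h : ¬π.SameCycle a u) (x : α) :
    (π * swap a u).SameCycle x (π x) := by
  have hau := sameCycle_mul_swap_of_not_sameCycle h
  by_cases hxa : x = a
  · subst hxa
    have : (π * swap x u) u = π x := by simp
    exact hau.trans (this ▸ sameCycle_apply_right.2 (SameCycle.refl _ u))
  by_cases hxu : x = u
  · subst hxu
    have : (π * swap a x) a = π x := by simp
    exact hau.symm.trans (this ▸ sameCycle_apply_right.2 (SameCycle.refl _ a))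
  have : (π * swap a u) x = π x := by simp [swap_apply_of_ne_of_ne hxa hxu]
  exact this ▸ sameCycle_apply_right.2 (SameCycle.refl _ x)

theorem SameCycle.mul_swap (h : ¬π.SameCycle a u) (hxy : π.SameCycle x y) :
    (π * swap a u).SameCycle x y :=
  hxy.mem_of_mapsTo (s := {z | (π * swap a u).SameCycle x z})
    (fun _ hz => hz.trans (sameCycle_mul_swap_apply h _)) (SameCycle.refl _ x)

end Finite

variable [Fintype α]

theorem exists_two_mul_card_sameCycle_le (h : ¬π.SameCycle x y) :
    ∃ a, 2 * #{w | π.SameCycle a w} ≤ Fintype.card α := by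
  have hdisj : _root_.Disjoint ({w | π.SameCycle x w} : Finset α)
      ({w | π.SameCycle y w} : Finset α) :=
    disjoint_filter.2 fun w _ hx hy => h (hx.trans hy.symm)
  have := card_union_of_disjoint hdisj ▸ card_le_univ _
  by_cases hx : 2 * #{w | π.SameCycle x w} ≤ Fintype.card α
  · exact ⟨x, hx⟩
  · exact ⟨y, by omega⟩

variable (C : α → α → Prop) [DecidableRel C] {d : ℕ}

theorem exists_not_sameCycle_and_rel (hd : 4 * d < Fintype.card α)
    (h₁ : ∀ u, #{w | ¬C u w} ≤ d) (h₂ : ∀ w, #{u | ¬C u w} ≤ d)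
    (ha : 2 * #{w | π.SameCycle a w} ≤ Fintype.card α) :
    ∃ u, ¬π.SameCycle a u ∧ C a (π u) ∧ C u (π a) := by
  by_contra! h
  have hcover : (univ : Finset α) ⊆
      ({w | π.SameCycle a w} : Finset α) ∪ ({w | ¬C a (π w)} : Finset α) ∪
        ({w | ¬C w (π a)} : Finset α) := by
    intro w _
    by_cases hw : π.SameCycle a w
    · simp [hw]
    by_cases hCw : C a (π w)
    · simp [h w hw hCw]
    · simp [hCw]
  have hperm : #{w | ¬C a (π w)} = #{w | ¬C a w} := card_equiv π (by simp)
  have := (card_le_card hcover).trans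
    ((card_union_le _ _).trans (add_le_add_left (card_union_le _ _) _))
  rw [card_univ, hperm] at this
  have := h₁ a
  have := h₂ (π a)
  omega

theorem exists_isCycleOn_univ_of_forall_rel (hd : 4 * d < Fintype.card α)
    (h₁ : ∀ u, #{w | ¬C u w} ≤ d) (h₂ : ∀ w, #{u | ¬C u w} ≤ d)
    (π : Perm α) (hπ : ∀ u, C u (π u)) :
    ∃ π' : Perm α, (∀ u, C u (π' u)) ∧ π'.IsCycleOn (univ : Finset α) := by
  induction hN : #{p : α × α | ¬π.SameCycle p.1 p.2} using Nat.strong_induction_on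
    generalizing π with
  | _ N ih =>
  by_cases hall : ∀ a b, π.SameCycle a b
  · exact ⟨π, hπ, by simp, fun a _ b _ => hall a b⟩
  push Not at hall
  obtain ⟨x, y, hxy⟩ := hall
  obtain ⟨a, ha⟩ := exists_two_mul_card_sameCycle_le hxy
  obtain ⟨u, hau, hCa, hCu⟩ := exists_not_sameCycle_and_rel C hd h₁ h₂ ha
  have hπ' : ∀ w, C w ((π * swap a u) w) := by
    intro w
    by_cases hwa : w = a
    · subst hwa; simpa using hCa
    by_cases hwu : w = u
    · subst hwu; simpa using hCu
    simpa [swap_apply_of_ne_of_ne hwa hwu] using hπ w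
  have hlt : #{p : α × α | ¬(π * swap a u).SameCycle p.1 p.2} < N := by
    refine hN ▸ card_lt_card ⟨?_, fun hsub => ?_⟩
    · intro p
      simp only [mem_filter, mem_univ, true_and]
      exact fun hp h' => hp (h'.mul_swap hau)
    · have := @hsub (a, u) (by simpa using hau)
      simp only [mem_filter, mem_univ, true_and] at this
      exact this (sameCycle_mul_swap_of_not_sameCycle hau)
  exact ih _ hlt _ hπ' rfl

end Equiv.Perm

section Hall

variable {α β : Type*} [Fintype α] [Fintype β] (r : α → β → Prop) [DecidableRel r]
  {d : ℕ}

theorem exists_equiv_forall_rel_of_card_compl_le (hcard : Fintype.card α = Fintype.card β)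
    (hd : 2 * d ≤ Fintype.card β) (hα : ∀ a, #{b | ¬r a b} ≤ d)
    (hβ : ∀ b, #{a | ¬r a b} ≤ d) :
    ∃ e : α ≃ β, ∀ a, r a (e a) := by
  have hall : ∀ A : Finset α, #A ≤ #{b | ∃ a ∈ A, r a b} := by
    intro A
    obtain rfl | ⟨a₀, ha₀⟩ := A.eq_empty_or_nonempty
    · simp
    -- A small `A` is covered by the image of `a₀`; a large one meets the preimage of every `b`.
    by_cases hA : #A + d ≤ Fintype.card β
    · have hsplit : #{b | r a₀ b} + #{b | ¬r a₀ b} = Fintype.card β :=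
        card_filter_add_card_filter_not _
      have hsub : ({b | r a₀ b} : Finset β) ⊆ ({b | ∃ a ∈ A, r a b} : Finset β) := by
        intro b
        simpa using fun hb => ⟨a₀, ha₀, hb⟩
      have := card_le_card hsub
      have := hα a₀
      omega
    · have hcover : ({b | ∃ a ∈ A, r a b} : Finset β) = univ := by
        refine eq_univ_of_forall fun b => mem_filter.2 ⟨mem_univ b, ?_⟩
        by_contra! hb
        have := card_le_card (s := A) (t := {a | ¬r a b}) fun a ha => by
          simpa using hb a ha
        have := hβ b
        omega
      rw [hcover, card_univ, ← hcard]
      exact card_le_univ A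
  obtain ⟨f, hf, hrf⟩ := (Fintype.all_card_le_filter_rel_iff_exists_injective r).1 hall
  exact ⟨.ofBijective f ((Fintype.bijective_iff_injective_and_card f).2 ⟨hf, hcard⟩), hrf⟩

theorem exists_equiv_apply_eq_forall_ne_rel [DecidableEq α] [DecidableEq β]
    (hcard : Fintype.card α = Fintype.card β)
    (hd : 2 * d < Fintype.card β) (hα : ∀ a, #{b | ¬r a b} ≤ d)
    (hβ : ∀ b, #{a | ¬r a b} ≤ d) (a₀ : α) (b₀ : β) :
    ∃ e : α ≃ β, e a₀ = b₀ ∧ ∀ a ≠ a₀, r a (e a) := by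
  obtain ⟨e, he⟩ := exists_equiv_forall_rel_of_card_compl_le
    (fun (a : {a // a ≠ a₀}) (b : {b // b ≠ b₀}) => r a b) (d := d)
    (by simp [hcard]) (by simp; omega)
    (fun a => (card_le_card_of_injOn Subtype.val (by intro b; simp)
      Subtype.val_injective.injOn).trans (hα a))
    (fun b => (card_le_card_of_injOn Subtype.val (by intro a; simp)
      Subtype.val_injective.injOn).trans (hβ b))
  refine ⟨(Equiv.optionSubtypeNe a₀).symm.trans ((Equiv.optionCongr e).trans
    (Equiv.optionSubtypeNe b₀)), by simp, fun a ha => ?_⟩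
  simpa [Equiv.optionSubtypeNe_symm_of_ne ha] using he ⟨a, ha⟩

end Hall

theorem Finset.card_filter_univ_val {α : Type*} {s : Finset α} (p : α → Prop)
    [DecidablePred p] :
    #{a : s | p a} = #{a ∈ s | p a} := by
  rw [← card_map (Function.Embedding.subtype _)]
  congr 1
  ext a
  simp [and_comm]

namespace SimpleGraph

variable {V : Type*} (G : SimpleGraph V)

theorem exists_walk_support_eq_map_range (f : ℕ → V) :
    ∀ L, (∀ i < L, G.Adj (f i) (f (i + 1))) →
      ∃ p : G.Walk (f 0) (f L), p.length = L ∧ p.support = (List.range (L + 1)).map f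
  | 0, _ => ⟨.nil, rfl, rfl⟩
  | L + 1, hadj => by
    obtain ⟨p, hlen, hsupp⟩ :=
      exists_walk_support_eq_map_range f L fun i hi => hadj i (by omega)
    refine ⟨p.concat (hadj L (by omega)), by simp [hlen], ?_⟩
    rw [Walk.support_concat, hsupp, List.range_succ (n := L + 1)]
    simp

theorem exists_isPath_of_injOn (f : ℕ → V) (L : ℕ) (hadj : ∀ i < L, G.Adj (f i) (f (i + 1)))
    (hinj : Set.InjOn f (Set.Iic L)) :
    ∃ p : G.Walk (f 0) (f L), p.IsPath ∧ p.length = L ∧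
      ∀ v ∈ p.support, ∃ i, f i = v := by
  obtain ⟨p, hlen, hsupp⟩ := exists_walk_support_eq_map_range G f L hadj
  refine ⟨p, ?_, hlen, fun v hv => ?_⟩
  · rw [Walk.isPath_def, hsupp]
    refine List.nodup_range.map_on fun i hi j hj hij => hinj ?_ ?_ hij <;>
      simp_all
  · rw [hsupp, List.mem_map] at hv
    obtain ⟨i, -, rfl⟩ := hv
    exact ⟨i, rfl⟩

theorem exists_isPath_interleave (a b : ℕ → V) {s : ℕ} (hs : 0 < s)
    (hab : ∀ i < s, G.Adj (a i) (b i)) (hba : ∀ i, i + 1 < s → G.Adj (b i) (a (i + 1)))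
    (ha : Set.InjOn a (Set.Iio s)) (hb : Set.InjOn b (Set.Iio s)) (hne : ∀ i j, a i ≠ b j) :
    ∃ p : G.Walk (a 0) (b (s - 1)), p.IsPath ∧ p.length = 2 * s - 1 ∧
      ∀ v ∈ p.support, ∃ i, v = a i ∨ v = b i := by
  set f : ℕ → V := fun i => if i % 2 = 0 then a (i / 2) else b (i / 2) with hf
  have hf_even (k : ℕ) : f (2 * k) = a k := by simp [hf]
  have hf_odd (k : ℕ) : f (2 * k + 1) = b k := by
    simp [hf, Nat.add_mod, show (2 * k + 1) / 2 = k by omega]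
  have hadj : ∀ i < 2 * s - 1, G.Adj (f i) (f (i + 1)) := by
    intro i hi
    obtain ⟨k, rfl | rfl⟩ := Nat.even_or_odd' i
    · rw [hf_even, hf_odd]; exact hab k (by omega)
    · rw [hf_odd, show 2 * k + 1 + 1 = 2 * (k + 1) by ring, hf_even]
      exact hba k (by omega)
  have hinj : Set.InjOn f (Set.Iic (2 * s - 1)) := by
    intro i hi j hj hij
    simp only [Set.mem_Iic] at hi hj
    obtain ⟨k, rfl | rfl⟩ := Nat.even_or_odd' i <;>
      obtain ⟨l, rfl | rfl⟩ := Nat.even_or_odd' j <;> simp only [hf_even, hf_odd] at hij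
    · rw [ha (by simp; omega) (by simp; omega) hij]
    · exact (hne _ _ hij).elim
    · exact (hne _ _ hij.symm).elim
    · rw [hb (by simp; omega) (by simp; omega) hij]
  obtain ⟨p, hp, hlen, hsupp⟩ := exists_isPath_of_injOn G f _ hadj hinj
  have hend : f (2 * s - 1) = b (s - 1) := by
    rw [show 2 * s - 1 = 2 * (s - 1) + 1 by omega, hf_odd]
  refine ⟨p.copy (hf_even 0) hend, by simpa using hp, by simpa using hlen, fun v hv => ?_⟩
  obtain ⟨i, rfl⟩ := hsupp v (by simpa using hv)
  obtain ⟨k, rfl | rfl⟩ := Nat.even_or_odd' i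
  · exact ⟨k, .inl (hf_even k)⟩
  · exact ⟨k, .inr (hf_odd k)⟩

theorem exists_isPath_of_isCycleOn [DecidableEq V] {S T : Finset V} (hST : Disjoint S T)
    (e : S ≃ T) {π : Equiv.Perm S} (hπ : π.IsCycleOn (univ : Finset S)) {x : S}
    (hπadj : ∀ u : S, G.Adj u (e (π u))) (hadj : ∀ u ≠ x, G.Adj u (e u)) :
    ∃ p : G.Walk x (e x), p.IsPath ∧ p.length = 2 * #S - 1 ∧
      ∀ v ∈ p.support, v ∈ S ∪ T := by
  have hS : #(univ : Finset S) = #S := by rw [card_univ, Fintype.card_coe]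
  have hpow {i j : ℕ} : (π ^ i) x = (π ^ j) x ↔ i ≡ j [MOD #S] :=
    hS ▸ hπ.pow_apply_eq_pow_apply (mem_univ x)
  have hpos : 0 < #S := card_pos.2 ⟨x, x.2⟩
  set a : ℕ → V := fun k => (π ^ k) x
  set b : ℕ → V := fun k => e ((π ^ (k + 1)) x)
  have hab : ∀ i < #S, G.Adj (a i) (b i) := fun i _ => by
    simpa [a, b, pow_succ'] using hπadj ((π ^ i) x)
  have hba : ∀ i, i + 1 < #S → G.Adj (b i) (a (i + 1)) := fun i hi => by
    refine (hadj _ fun h => ?_).symm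
    have := (hpow (i := i + 1) (j := 0)).1 (by simpa using h)
    exact absurd (this.eq_of_lt_of_lt hi hpos) (by omega)
  have ha : Set.InjOn a (Set.Iio #S) := fun i hi j hj h =>
    (hpow.1 (Subtype.val_injective h)).eq_of_lt_of_lt hi hj
  have hb : Set.InjOn b (Set.Iio #S) := fun i hi j hj h =>
    ((hpow.1 (e.injective (Subtype.val_injective h))).add_right_cancel' 1).eq_of_lt_of_lt
      hi hj
  have hne : ∀ i j, a i ≠ b j := fun i j h =>
    Finset.disjoint_left.1 hST ((π ^ i) x).2 (show a i ∈ T from h ▸ (e _).2)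
  obtain ⟨p, hp, hlen, hsupp⟩ := G.exists_isPath_interleave a b hpos hab hba ha hb hne
  have hbend : b (#S - 1) = e x := by
    have : (π ^ #S) x = x := (hS ▸ hπ.pow_apply_eq (mem_univ x)).2 dvd_rfl
    simp [b, Nat.sub_add_cancel hpos, this]
  refine ⟨p.copy (by simp [a]) hbend, by rwa [Walk.isPath_copy], by rwa [Walk.length_copy],
    fun v hv => ?_⟩
  obtain ⟨i, rfl | rfl⟩ := hsupp v (by rwa [Walk.support_copy] at hv)
  · exact mem_union_left _ ((π ^ i) x).2
  · exact mem_union_right _ (e ((π ^ (i + 1)) x)).2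

theorem exists_spanning_isPath_of_card_compl_le [DecidableEq V] [DecidableRel G.Adj]
    {S T : Finset V} (hST : Disjoint S T) (hcard : #S = #T) {d : ℕ} (hd : 4 * d < #S)
    (hS : ∀ u ∈ S, #{w ∈ T | ¬G.Adj u w} ≤ d)
    (hT : ∀ w ∈ T, #{u ∈ S | ¬G.Adj w u} ≤ d)
    {x y : V} (hx : x ∈ S) (hy : y ∈ T) :
    ∃ p : G.Walk x y, p.IsPath ∧ p.length = 2 * #S - 1 ∧
      ∀ v ∈ p.support, v ∈ S ∪ T := by
  set r : S → T → Prop := fun u v => G.Adj u v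
  have hcardS : Fintype.card S = #S := Fintype.card_coe S
  have hcardST : Fintype.card S = Fintype.card T := by simpa using hcard
  have hr₁ : ∀ u, #{v | ¬r u v} ≤ d := fun u => by
    rw [card_filter_univ_val (fun w => ¬G.Adj u w)]; exact hS u u.2
  have hr₂ : ∀ v, #{u | ¬r u v} ≤ d := fun v => by
    simp only [r, G.adj_comm _ (v : V)]
    rw [card_filter_univ_val (fun w => ¬G.Adj v w)]; exact hT v v.2
  obtain ⟨e₀, he₀⟩ :=
    exists_equiv_forall_rel_of_card_compl_le r hcardST (by omega) hr₁ hr₂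
  obtain ⟨e, hex, he⟩ :=
    exists_equiv_apply_eq_forall_ne_rel r hcardST (by omega) hr₁ hr₂ ⟨x, hx⟩ ⟨y, hy⟩
  obtain ⟨π, hπadj, hπ⟩ := Equiv.Perm.exists_isCycleOn_univ_of_forall_rel
    (fun u w => r u (e w)) (d := d) (by omega)
    (fun u => (card_equiv e (by simp)).le.trans (hr₁ u)) (fun w => hr₂ (e w))
    (e₀.trans e.symm) (by simpa using he₀)
  obtain ⟨p, hp, hlen, hsupp⟩ := G.exists_isPath_of_isCycleOn hST e hπ hπadj he
  exact ⟨p.copy rfl (by rw [hex]), by rwa [Walk.isPath_copy], by rwa [Walk.length_copy],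
    by rwa [Walk.support_copy]⟩

section NearlyCompleteBipartite

variable [DecidableEq V] [DecidableRel G.Adj] {A B : Finset V} {d s : ℕ}

theorem exists_isPath_length_eq_two_mul_sub_one (hAB : Disjoint A B) (hd : 4 * d < s)
    (hsA : s ≤ #A) (hsB : s ≤ #B)
    (hA : ∀ u ∈ A, #{w ∈ B | ¬G.Adj u w} ≤ d)
    (hB : ∀ w ∈ B, #{u ∈ A | ¬G.Adj w u} ≤ d)
    {x y : V} (hx : x ∈ A) (hy : y ∈ B) :
    ∃ p : G.Walk x y, p.IsPath ∧ p.length = 2 * s - 1 ∧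
      ∀ v ∈ p.support, v ∈ A ∪ B := by
  obtain ⟨S, hxS, hSA, hS⟩ :=
    exists_subsuperset_card_eq (singleton_subset_iff.2 hx) (by simp; omega) hsA
  obtain ⟨T, hyT, hTB, hT⟩ :=
    exists_subsuperset_card_eq (singleton_subset_iff.2 hy) (by simp; omega) hsB
  obtain ⟨p, hp, hlen, hsupp⟩ :=
    G.exists_spanning_isPath_of_card_compl_le (hAB.mono hSA hTB) (hS.trans hT.symm) (hS ▸ hd)
    (fun u hu => (card_le_card (filter_subset_filter _ hTB)).trans (hA u (hSA hu)))
    (fun w hw => (card_le_card (filter_subset_filter _ hSA)).trans (hB w (hTB hw)))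
    (singleton_subset_iff.1 hxS) (singleton_subset_iff.1 hyT)
  exact ⟨p, hp, hS ▸ hlen, fun v hv => union_subset_union hSA hTB (hsupp v hv)⟩

theorem exists_isPath_length_eq_two_mul (hAB : Disjoint A B) (hd : 4 * d < s)
    (hsA : s < #A) (hsB : s ≤ #B)
    (hA : ∀ u ∈ A, #{w ∈ B | ¬G.Adj u w} ≤ d)
    (hB : ∀ w ∈ B, #{u ∈ A | ¬G.Adj w u} ≤ d)
    {x x' : V} (hx : x ∈ A) (hx' : x' ∈ A) (hxx' : x ≠ x') :
    ∃ p : G.Walk x x', p.IsPath ∧ p.length = 2 * s := by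
  obtain ⟨y, hy⟩ : {w ∈ B | G.Adj x w}.Nonempty := by
    have : #{w ∈ B | G.Adj x w} + #{w ∈ B | ¬G.Adj x w} = #B :=
      card_filter_add_card_filter_not _
    have := hA x hx
    exact card_pos.1 (by omega)
  rw [mem_filter] at hy
  obtain ⟨p, hp, hlen, hsupp⟩ := G.exists_isPath_length_eq_two_mul_sub_one
    (hAB.mono_left (erase_subset x A)) hd (by rw [card_erase_of_mem hx]; omega) hsB
    (fun u hu => hA u (mem_of_mem_erase hu))
    (fun w hw => (card_le_card (filter_subset_filter _ (erase_subset x A))).trans (hB w hw))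
    (mem_erase.2 ⟨hxx'.symm, hx'⟩) hy.1
  have hxp : x ∉ p.reverse.support := by
    rw [Walk.support_reverse, List.mem_reverse]
    intro hxp
    rcases mem_union.1 (hsupp x hxp) with h | h
    · exact (notMem_erase x A) h
    · exact Finset.disjoint_left.1 hAB hx h
  exact ⟨.cons hy.2 p.reverse, hp.reverse.cons hxp, by simp [hlen]; omega⟩

end NearlyCompleteBipartite

end SimpleGraph

theorem stmt11_general (δ : ℝ) (hδ0 : 0 < δ) :
    ∃ n₀ : ℕ, ∀ n : ℕ, n₀ ≤ n →
    ∀ (V : Type) [Fintype V] [DecidableEq V]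
      (H : SimpleGraph V) [DecidableRel H.Adj] (A1 A2 : Finset V),
      Disjoint A1 A2 →
      -- |A_1|, |A_2| ≥ (1/4 - 5δ)n
      ((1 : ℝ) / 4 - 5 * δ) * n ≤ A1.card →
      ((1 : ℝ) / 4 - 5 * δ) * n ≤ A2.card →
      -- H is bipartite with parts A1, A2
      (∀ u v : V, H.Adj u v → (u ∈ A1 ∧ v ∈ A2) ∨ (u ∈ A2 ∧ v ∈ A1)) →
      -- every vertex has deficiency at most 10δn
      (∀ v ∈ A1, ((A2.filter fun w => ¬ H.Adj v w).card : ℝ) ≤ 10 * δ * n) →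
      (∀ v ∈ A2, ((A1.filter fun w => ¬ H.Adj v w).card : ℝ) ≤ 10 * δ * n) →
      ∀ ℓ : ℕ, 80 * δ * n + 3 ≤ (ℓ : ℝ) → (ℓ : ℝ) ≤ ((1 : ℝ) / 2 - 10 * δ) * n - 1 →
        -- (1) odd ℓ: a path of exactly ℓ edges between any x₁ ∈ A₁ and x₂ ∈ A₂
        ((Odd ℓ → ∀ x1 ∈ A1, ∀ x2 ∈ A2,
            ∃ p : H.Walk x1 x2, p.IsPath ∧ p.length = ℓ) ∧
        -- (2) even ℓ: a path of exactly ℓ edges between any distinct x₁, x₁' ∈ A₁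
         (Even ℓ → ∀ x1 ∈ A1, ∀ x1' ∈ A1, x1 ≠ x1' →
            ∃ p : H.Walk x1 x1', p.IsPath ∧ p.length = ℓ)) := by
  refine ⟨0, fun n _ V _ _ H _ A1 A2 hAB hcard1 hcard2 _ hdef1 hdef2 ℓ hℓlo hℓhi => ?_⟩
  set d := ⌊10 * δ * n⌋₊
  have hd : (d : ℝ) ≤ 10 * δ * n := Nat.floor_le (by positivity)
  have hdℓ : 8 * d + 3 ≤ ℓ := by exact_mod_cast (by linarith : (8 * d + 3 : ℝ) ≤ ℓ)
  have hA1 : ℓ + 1 ≤ 2 * #A1 := by exact_mod_cast (by linarith : (ℓ + 1 : ℝ) ≤ 2 * #A1)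
  have hA2 : ℓ + 1 ≤ 2 * #A2 := by exact_mod_cast (by linarith : (ℓ + 1 : ℝ) ≤ 2 * #A2)
  have hA : ∀ v ∈ A1, #{w ∈ A2 | ¬H.Adj v w} ≤ d := fun v hv => Nat.le_floor (hdef1 v hv)
  have hB : ∀ v ∈ A2, #{w ∈ A1 | ¬H.Adj v w} ≤ d := fun v hv => Nat.le_floor (hdef2 v hv)
  refine ⟨fun ⟨m, hm⟩ x1 hx1 x2 hx2 => ?_, fun ⟨m, hm⟩ x1 hx1 x1' hx1' hne => ?_⟩
  · obtain ⟨p, hp, hlen, -⟩ := H.exists_isPath_length_eq_two_mul_sub_one (s := m + 1) hAB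
      (by omega) (by omega) (by omega) hA hB hx1 hx2
    exact ⟨p, hp, by omega⟩
  · obtain ⟨p, hp, hlen⟩ := H.exists_isPath_length_eq_two_mul (s := m) hAB
      (by omega) (by omega) (by omega) hA hB hx1 hx1' hne
    exact ⟨p, hp, by omega⟩

theorem stmt11 (δ : ℝ) (hδ0 : 0 < δ) (hδ1 : δ < 1 / 1000) :
    ∃ n₀ : ℕ, ∀ n : ℕ, n₀ ≤ n →
    ∀ (V : Type) [Fintype V] [DecidableEq V]
      (H : SimpleGraph V) [DecidableRel H.Adj] (A1 A2 : Finset V),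
      Disjoint A1 A2 →
      -- |A_1|, |A_2| ≥ (1/4 - 5δ)n
      ((1 : ℝ) / 4 - 5 * δ) * n ≤ A1.card →
      ((1 : ℝ) / 4 - 5 * δ) * n ≤ A2.card →
      -- H is bipartite with parts A1, A2
      (∀ u v : V, H.Adj u v → (u ∈ A1 ∧ v ∈ A2) ∨ (u ∈ A2 ∧ v ∈ A1)) →
      -- every vertex has deficiency at most 10δn
      (∀ v ∈ A1, ((A2.filter fun w => ¬ H.Adj v w).card : ℝ) ≤ 10 * δ * n) →
      (∀ v ∈ A2, ((A1.filter fun w => ¬ H.Adj v w).card : ℝ) ≤ 10 * δ * n) →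
      ∀ ℓ : ℕ, 80 * δ * n + 3 ≤ (ℓ : ℝ) → (ℓ : ℝ) ≤ ((1 : ℝ) / 2 - 10 * δ) * n - 1 →
        -- (1) odd ℓ: a path of exactly ℓ edges between any x₁ ∈ A₁ and x₂ ∈ A₂
        ((Odd ℓ → ∀ x1 ∈ A1, ∀ x2 ∈ A2,
            ∃ p : H.Walk x1 x2, p.IsPath ∧ p.length = ℓ) ∧
        -- (2) even ℓ: a path of exactly ℓ edges between any distinct x₁, x₁' ∈ A₁
         (Even ℓ → ∀ x1 ∈ A1, ∀ x1' ∈ A1, x1 ≠ x1' →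
            ∃ p : H.Walk x1 x1', p.IsPath ∧ p.length = ℓ)) :=
  stmt11_general δ hδ0
end

section
/- Let 0 < δ < 1/1000 and let G be a graph of sufficiently large order k with minimum degree at least (3/4 - δ)k. Suppose (R_1, B_1) and (R_2, B_2) are two proper 2-edge-colorings of G that differ in the color of exactly one edge, and there exist sets S_1, S_2 ⊆ V(G) with |S_1|, |S_2| ≥ (2/3 - δ/2)k such that Δ(R_1[S_1]) ≤ 10δk and Δ(B_2[S_2]) ≤ 10δk. Then a contradiction arises: some vertex v ∈ S_1 ∩ S_2 would have degree at most (2/3 + 21δ)k < (3/4 - δ)k in G. -/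
theorem stmt14 (δ : ℝ) (hδ0 : 0 < δ) (hδ1 : δ < 1 / 1000) :
    ∃ k₀ : ℕ, ∀ k : ℕ, k₀ ≤ k →
    ∀ (V : Type) [Fintype V] [DecidableEq V]
      (G R1 B1 R2 B2 : SimpleGraph V)
      [DecidableRel G.Adj] [DecidableRel R1.Adj] [DecidableRel B2.Adj],
      Fintype.card V = k →
      -- minimum degree at least (3/4 - δ)k
      (∀ v : V, ((3 : ℝ) / 4 - δ) * k ≤ G.degree v) →
      -- (R1, B1) and (R2, B2) are proper 2-edge-colorings of G
      R1 ⊔ B1 = G → Disjoint R1 B1 →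
      R2 ⊔ B2 = G → Disjoint R2 B2 →
      -- differing in the color of exactly one edge
      (∃ e : Sym2 V, e ∈ G.edgeSet ∧
        (R1.edgeSet \ R2.edgeSet) ∪ (R2.edgeSet \ R1.edgeSet) = {e}) →
      ∀ S1 S2 : Finset V,
        ((2 : ℝ) / 3 - δ / 2) * k ≤ S1.card →
        ((2 : ℝ) / 3 - δ / 2) * k ≤ S2.card →
        -- Δ(R1[S1]) ≤ 10δk and Δ(B2[S2]) ≤ 10δk
        (∀ v ∈ S1, ((S1.filter fun w => R1.Adj v w).card : ℝ) ≤ 10 * δ * k) →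
        (∀ v ∈ S2, ((S2.filter fun w => B2.Adj v w).card : ℝ) ≤ 10 * δ * k) →
        False := by
  refine ⟨100, ?_⟩
  intro k hk V _ _ G R1 B1 R2 B2 _ _ _ hcard hmin h1 hd1 h2 hd2 hdiff S1 S2 hS1 hS2 hR1 hB2
  obtain ⟨e, heG, hsym⟩ := hdiff
  induction e using Sym2.ind with
  | _ a b =>
  classical
  set T := S1 ∩ S2 with hT
  have hk' : (100 : ℝ) ≤ k := by exact_mod_cast hk
  have hunion : ((S1 ∪ S2).card : ℝ) ≤ k := by
    have h := Finset.card_le_card (Finset.subset_univ (S1 ∪ S2))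
    rw [Finset.card_univ, hcard] at h
    exact_mod_cast h
  have hTcard : ((1 : ℝ)/3 - δ) * k ≤ T.card := by
    have h := Finset.card_union_add_card_inter S1 S2
    have h' : ((S1 ∪ S2).card : ℝ) + ((S1 ∩ S2).card : ℝ) = S1.card + S2.card := by
      exact_mod_cast congrArg (Nat.cast (R := ℝ)) h
    rw [← hT] at h'
    linarith
  have h33 : (33 : ℝ) ≤ ((1 : ℝ)/3 - δ) * k := by
    nlinarith [mul_nonneg (by linarith : (0:ℝ) ≤ (1:ℝ)/3 - δ) (by linarith : (0:ℝ) ≤ (k:ℝ) - 100)]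
  have hT3 : 3 ≤ T.card := by
    have h2' : (2 : ℝ) < (T.card : ℝ) := by linarith
    exact_mod_cast (by exact_mod_cast h2' : 2 < T.card)
  have hE1 : T.card - 1 ≤ (T.erase a).card := Finset.pred_card_le_card_erase
  have hE2 : (T.erase a).card - 1 ≤ ((T.erase a).erase b).card := Finset.pred_card_le_card_erase
  have hpos : 0 < ((T.erase a).erase b).card := by omega
  obtain ⟨v, hv⟩ := Finset.card_pos.mp hpos
  rw [Finset.mem_erase, Finset.mem_erase] at hv
  obtain ⟨hvb, hva, hvT⟩ := hv
  have hv1 : v ∈ S1 := (Finset.mem_inter.mp hvT).1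
  have hv2 : v ∈ S2 := (Finset.mem_inter.mp hvT).2
  -- colorings agree at v
  have hagree : ∀ w, (R1.Adj v w ↔ R2.Adj v w) := by
    intro w
    by_contra hcon
    have hmem : s(v, w) ∈ (R1.edgeSet \ R2.edgeSet) ∪ (R2.edgeSet \ R1.edgeSet) := by
      simp only [Set.mem_union, Set.mem_diff, SimpleGraph.mem_edgeSet]
      tauto
    rw [hsym, Set.mem_singleton_iff, Sym2.eq_iff] at hmem
    rcases hmem with ⟨h, _⟩ | ⟨h, _⟩
    · exact hva h
    · exact hvb h
  have hdis1 : ∀ x y, R1.Adj x y → ¬ B1.Adj x y := by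
    intro x y hx hy
    have : (R1 ⊓ B1).Adj x y := ⟨hx, hy⟩
    rw [disjoint_iff.mp hd1] at this
    exact this
  have hred : ∀ w, G.Adj v w → R1.Adj v w ∨ B2.Adj v w := by
    intro w hw
    by_cases hr : R1.Adj v w
    · exact Or.inl hr
    · right
      have hr2 : ¬ R2.Adj v w := fun h => hr ((hagree w).mpr h)
      have hw2 : R2.Adj v w ∨ B2.Adj v w := by
        rw [← h2, SimpleGraph.sup_adj] at hw; exact hw
      tauto
  -- degree count
  set N := G.neighborFinset v with hN
  have hsplit : N.card = (N ∩ T).card + (N \ T).card :=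
    (Finset.card_inter_add_card_sdiff N T).symm
  have hout : (N \ T).card ≤ k - T.card := by
    have hsub : N \ T ⊆ Finset.univ \ T :=
      Finset.sdiff_subset_sdiff (Finset.subset_univ N) le_rfl
    have := Finset.card_le_card hsub
    rwa [Finset.card_sdiff_of_subset (Finset.subset_univ T), Finset.card_univ, hcard] at this
  have hin : (N ∩ T) ⊆ (S1.filter fun w => R1.Adj v w) ∪ (S2.filter fun w => B2.Adj v w) := by
    intro w hw
    rw [Finset.mem_inter] at hw
    obtain ⟨hwN, hwT⟩ := hw
    have hadj : G.Adj v w := by rwa [hN, SimpleGraph.mem_neighborFinset] at hwN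
    rcases hred w hadj with h | h
    · exact Finset.mem_union_left _ (Finset.mem_filter.mpr ⟨(Finset.mem_inter.mp hwT).1, h⟩)
    · exact Finset.mem_union_right _ (Finset.mem_filter.mpr ⟨(Finset.mem_inter.mp hwT).2, h⟩)
  have hinc : ((N ∩ T).card : ℝ) ≤ 20 * δ * k := by
    have h := Finset.card_le_card hin
    have h' := le_trans h (Finset.card_union_le _ _)
    have h'' : ((N ∩ T).card : ℝ) ≤ ((S1.filter fun w => R1.Adj v w).card : ℝ)
        + ((S2.filter fun w => B2.Adj v w).card : ℝ) := by exact_mod_cast h'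
    have := hR1 v hv1
    have := hB2 v hv2
    linarith
  have hTk : T.card ≤ k := by
    have := Finset.card_le_card (Finset.subset_univ T)
    rwa [Finset.card_univ, hcard] at this
  have hdeg : (G.degree v : ℝ) ≤ 20 * δ * k + ((k : ℝ) - T.card) := by
    have hdegN : G.degree v = N.card := (SimpleGraph.card_neighborFinset_eq_degree G v).symm
    have hout' : ((N \ T).card : ℝ) ≤ (k : ℝ) - T.card := by
      have : ((N \ T).card : ℝ) ≤ ((k - T.card : ℕ) : ℝ) := by exact_mod_cast hout
      rwa [Nat.cast_sub hTk] at this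
    have hsplit' : (N.card : ℝ) = ((N ∩ T).card : ℝ) + ((N \ T).card : ℝ) := by
      exact_mod_cast hsplit
    rw [hdegN]
    linarith
  have hmin' := hmin v
  nlinarith [mul_nonneg (by linarith : (0:ℝ) ≤ δ) (by linarith : (0:ℝ) ≤ (k:ℝ))]
end

section
/- Let 0 < δ < 1/1000 and n large with n = 3t + r, r ∈ {0,1,2}. Let G be a graph on n vertices with minimum degree at least (3n-1)/4 with red/blue coloring, and let L ⊆ V(G) with |L| ≥ (2/3 - δ)n. Suppose X ⊆ V(G) \ L is a set of m ≤ t + 1 vertices each having fewer than δn + 2 blue edges into L. Then every vertex of X has at least (5/12 - 3δ)n red neighbors in L, and the red bipartite graph R[X, L] contains a cycle of length 2m. -/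
/-!
The red degree bound is counting: a vertex of `X` has at most `(n - 3) / 4` non-neighbours in `G`
and fewer than `δn + 2` blue neighbours in `L`.

For the cycle, every vertex of `X` misses at most `d ≈ (1/4 + δ) n` vertices of `L` in the red
bipartite graph, and `|L| ≥ 2d + 6`, `5d < 4 (|L| - |X| + 1)`. The vertices of `X` are added one
at a time to a cycle alternating between the chosen vertices of `X` and as many vertices of `L`.
To add `a`, call a vertex `w` of the cycle a pivot if `a ~ w`, and let `x_w` be the vertex after
`w`. If two pivots `w₁, w₂` are such that `x_{w₁}, x_{w₂}` have a common neighbour `v` off the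
cycle, reroute the cycle through `w₁ a w₂` and `x_{w₁} v x_{w₂}`. Otherwise the vertices `x_w`
have pairwise disjoint neighbourhoods among the `u ≥ |L| - |X| + 1` unused vertices of `L`, each
of size at least `u - d`, so there are at most four pivots. Then `a` has at least `|L| - d - 4`
unused neighbours, and two of them, adjacent to consecutive vertices `x₀, x₁` of `X` on the
cycle, let `a` be inserted between `x₀` and `x₁`.
-/

open Finset

theorem Finset.exists_ne_not_disjoint_of_card_lt_sum {ι α : Type*} [DecidableEq α]
    {s : Finset ι} {t : ι → Finset α} {U : Finset α} (ht : ∀ i ∈ s, t i ⊆ U)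
    (h : #U < ∑ i ∈ s, #(t i)) : ∃ i ∈ s, ∃ j ∈ s, i ≠ j ∧ ¬Disjoint (t i) (t j) := by
  by_contra! hdisj
  rw [← card_biUnion fun i hi j hj hij => hdisj i hi j hj hij] at h
  exact h.not_ge (card_le_card (biUnion_subset.2 ht))

namespace Cycle

variable {α : Type*}

theorem exists_eq_coe_cons {s : Cycle α} {a : α} (h : a ∈ s) : ∃ l : List α, s = ↑(a :: l) := by
  induction s using Quotient.inductionOn' with
  | h l =>
    obtain ⟨p, q, rfl⟩ := List.append_of_mem (mem_coe_iff.1 h)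
    exact ⟨q ++ p, coe_eq_coe.2 List.isRotated_append⟩

theorem exists_eq_coe_cons_cons {s : Cycle α} {a : α} (h : a ∈ s) (hs : 2 ≤ s.length) :
    ∃ b l, s = ↑(a :: b :: l) := by
  obtain ⟨_ | ⟨b, l⟩, rfl⟩ := exists_eq_coe_cons h
  · simp at hs
  · exact ⟨b, l, rfl⟩

theorem exists_eq_coe_cons_cons_cons {s : Cycle α} {a : α} (h : a ∈ s) (hs : 3 ≤ s.length) :
    ∃ b c l, s = ↑(a :: b :: c :: l) := by
  obtain ⟨_ | ⟨b, _ | ⟨c, l⟩⟩, rfl⟩ := exists_eq_coe_cons h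
  · simp at hs
  · simp at hs
  · exact ⟨b, c, l, rfl⟩

theorem mem_toFinset [DecidableEq α] {s : Cycle α} {a : α} : a ∈ s.toFinset ↔ a ∈ s := by
  induction s using Quotient.inductionOn' with
  | h l => exact List.mem_toFinset

theorem Chain.rel_of_coe_cons_cons {r : α → α → Prop} {a b : α} {l : List α}
    (h : Chain r ↑(a :: b :: l)) : r a b :=
  (List.isChain_cons_cons.1 h).1

variable [DecidableEq α]

theorem eq_of_coe_cons_cons_eq {a b c : α} {l m : List α}
    (h : (↑(a :: b :: l) : Cycle α) = ↑(a :: c :: m)) (hn : (a :: b :: l).Nodup) : b = c := by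
  simpa using List.isRotated_next_eq (coe_eq_coe.1 h) hn List.mem_cons_self

theorem exists_eq_coe_split {s : Cycle α} (hn : s.Nodup) {w₁ x₁ w₂ x₂ : α}
    {l₁ l₂ : List α} (h₁ : s = ↑(w₁ :: x₁ :: l₁)) (h₂ : s = ↑(w₂ :: x₂ :: l₂)) (hw : w₁ ≠ w₂)
    (hwx : w₂ ≠ x₁) (hxw : x₂ ≠ w₁) : ∃ A B, s = ↑(x₂ :: A ++ w₁ :: x₁ :: B ++ [w₂]) := by
  have hw₂ : w₂ ∈ l₁ := by
    have : w₂ ∈ (↑(w₁ :: x₁ :: l₁) : Cycle α) := h₁ ▸ h₂ ▸ mem_coe_iff.2 List.mem_cons_self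
    simpa [hw.symm, hwx] using this
  obtain ⟨B, D, rfl⟩ := List.append_of_mem hw₂
  have hrot : s = ↑(w₂ :: (D ++ w₁ :: x₁ :: B)) :=
    h₁.trans (coe_eq_coe.2 (List.isRotated_append (l := w₁ :: x₁ :: B) (l' := w₂ :: D)))
  have hnd : (w₂ :: (D ++ w₁ :: x₁ :: B)).Nodup := nodup_coe_iff.1 (hrot ▸ hn)
  obtain _ | ⟨y, A⟩ := D
  · exact absurd (eq_of_coe_cons_cons_eq (hrot.symm.trans h₂) hnd).symm hxw
  obtain rfl : x₂ = y := (eq_of_coe_cons_cons_eq (hrot.symm.trans h₂) hnd).symm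
  refine ⟨A, B, hrot.trans (coe_eq_coe.2 ?_)⟩
  simpa using List.isRotated_append (l := [w₂]) (l' := x₂ :: (A ++ w₁ :: x₁ :: B))

end Cycle

namespace SimpleGraph

variable {V : Type*} {G : SimpleGraph V}

theorem exists_isCycle_of_chain {s : Cycle V} (hn : s.Nodup) (hc : s.Chain G.Adj)
    (hs : 3 ≤ s.length) : ∃ (u : V) (c : G.Walk u u), c.IsCycle ∧ c.length = s.length := by
  induction s using Quotient.inductionOn' with
  | h l =>
  simp only [Cycle.mk''_eq_coe, Cycle.length_coe, Cycle.nodup_coe_iff] at hn hc hs ⊢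
  obtain _ | ⟨u, l⟩ := l
  · simp at hs
  rw [Cycle.chain_coe_cons] at hc
  obtain ⟨c, hsupp⟩ : ∃ c : G.Walk u u, c.support = u :: (l ++ [u]) :=
    ⟨(Walk.ofSupport _ (List.cons_ne_nil _ _) hc).copy (by simp) (by simp),
      (Walk.support_copy _ _ _).trans (Walk.support_ofSupport _ _)⟩
  have hlen : c.length = (u :: l).length := by
    simpa [hsupp] using c.length_support.symm
  refine ⟨u, c, Walk.isCycle_iff_isPath_tail_and_le_length.2 ⟨?_, hlen ▸ hs⟩, hlen⟩
  rw [Walk.isPath_def, Walk.support_tail_of_not_nil _ (by simp [← Walk.length_eq_zero_iff]; omega),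
    hsupp]
  simpa [List.nodup_append_comm (l₁ := l)] using hn

theorem card_le_card_filter_adj_add [DecidableRel G.Adj] {L S : Finset V} {x : V} {d : ℕ}
    (hS : S ⊆ L) (hx : #{w ∈ L | ¬G.Adj x w} ≤ d) : #S ≤ #{w ∈ S | G.Adj x w} + d := by
  have := card_filter_add_card_filter_not (s := S) (fun w => G.Adj x w)
  have := card_le_card (filter_subset_filter (fun w => ¬G.Adj x w) hS)
  omega

section CycleThrough

variable [DecidableEq V]

/-- When `G` is bipartite between `X ⊇ Y` and `L`, such a cycle alternates between the vertices
of `Y` and `#Y` vertices of `L`. -/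
structure IsCycleThrough (G : SimpleGraph V) (Y L : Finset V) (s : Cycle V) : Prop where
  nodup : s.Nodup
  chain : s.Chain G.Adj
  length_eq : s.length = 2 * #Y
  subset_toFinset : Y ⊆ s.toFinset
  toFinset_subset : s.toFinset ⊆ Y ∪ L

namespace IsCycleThrough

variable {Y L : Finset V}

theorem pair {x y w w' : V} (hxy : x ≠ y) (hww : w ≠ w') (hx : x ∉ L) (hy : y ∉ L)
    (hw : w ∈ L) (hw' : w' ∈ L) (h₁ : G.Adj x w) (h₂ : G.Adj w y) (h₃ : G.Adj y w')
    (h₄ : G.Adj w' x) : G.IsCycleThrough {x, y} L ↑[x, w, y, w'] where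
  nodup := by
    have := ne_of_mem_of_not_mem hw hx
    have := ne_of_mem_of_not_mem hw hy
    have := ne_of_mem_of_not_mem hw' hx
    have := ne_of_mem_of_not_mem hw' hy
    simp only [Cycle.nodup_coe_iff, List.nodup_cons, List.mem_cons, List.not_mem_nil]
    grind
  chain := by simp [h₁, h₂, h₃, h₄]
  length_eq := by simp [card_pair hxy]
  subset_toFinset := by simp [insert_subset_iff]
  toFinset_subset := by simp [insert_subset_iff, hw, hw']

theorem insert_between {x₀ w₀ x₁ a w' w'' : V} {l : List V}
    (hs : G.IsCycleThrough Y L ↑(x₀ :: w₀ :: x₁ :: l)) (hw₀ : w₀ ∉ Y) (ha : a ∉ Y) (haL : a ∉ L)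
    (hw' : w' ∈ L \ (x₀ :: w₀ :: x₁ :: l).toFinset)
    (hw'' : w'' ∈ L \ (x₀ :: w₀ :: x₁ :: l).toFinset) (hne : w' ≠ w'')
    (h₁ : G.Adj x₀ w') (h₂ : G.Adj w' a) (h₃ : G.Adj a w'') (h₄ : G.Adj w'' x₁) :
    G.IsCycleThrough (insert a Y) L ↑(x₀ :: w' :: a :: w'' :: x₁ :: l) where
  nodup := by
    have hn := hs.nodup
    have hsub := hs.toFinset_subset
    simp only [Cycle.nodup_coe_iff] at hn ⊢
    simp only [Cycle.coe_toFinset, mem_sdiff, List.mem_toFinset] at hw' hw'' hsub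
    have haw' : a ≠ w' := by rintro rfl; exact haL hw'.1
    have haw'' : a ≠ w'' := by rintro rfl; exact haL hw''.1
    have has : a ∉ x₀ :: w₀ :: x₁ :: l := fun h => by
      simpa [ha, haL] using hsub (List.mem_toFinset.2 h)
    simp only [List.nodup_cons, List.mem_cons, not_or] at hn hw' hw'' has ⊢
    tauto
  chain := by
    have hc := hs.chain
    simp only [Cycle.chain_coe_cons, List.cons_append, List.isChain_cons_cons] at hc ⊢
    exact ⟨h₁, h₂, h₃, h₄, hc.2.2⟩
  length_eq := by
    have := hs.length_eq
    simp only [Cycle.length_coe, List.length_cons] at this ⊢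
    rw [card_insert_of_notMem ha]
    omega
  subset_toFinset := by
    intro v hv
    rcases mem_insert.1 hv with rfl | hv
    · simp
    have hv' := hs.subset_toFinset hv
    have : v ≠ w₀ := fun h => hw₀ (h ▸ hv)
    simp only [Cycle.coe_toFinset, List.mem_toFinset, List.mem_cons] at hv' ⊢
    tauto
  toFinset_subset := by
    intro v hv
    have hv' := @hs.toFinset_subset v
    have := (mem_sdiff.1 hw').1
    have := (mem_sdiff.1 hw'').1
    simp only [Cycle.coe_toFinset, List.mem_toFinset, List.mem_cons, mem_union,
      mem_insert] at hv hv' ⊢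
    grind

open scoped List in
theorem surgery {u v u' v' a w : V} {A B : List V}
    (hs : G.IsCycleThrough Y L ↑(u :: A ++ v :: u' :: B ++ [v'])) (ha : a ∉ Y) (haL : a ∉ L)
    (hw : w ∈ L \ (u :: A ++ v :: u' :: B ++ [v']).toFinset)
    (h₁ : G.Adj w u) (h₂ : G.Adj v a) (h₃ : G.Adj a v') (h₄ : G.Adj u' w) :
    G.IsCycleThrough (insert a Y) L ↑(w :: u :: A ++ v :: a :: v' :: B.reverse ++ [u']) := by
  set l := u :: A ++ v :: u' :: B ++ [v']
  have hperm : (w :: u :: A ++ v :: a :: v' :: B.reverse ++ [u']) ~ a :: w :: l := by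
    have hrev : (v' :: B.reverse ++ [u']) ~ (u' :: B ++ [v']) := by
      simpa using (List.reverse_perm (u' :: B ++ [v']))
    calc (w :: u :: A ++ v :: a :: v' :: B.reverse ++ [u'])
        = w :: ((u :: A ++ [v]) ++ a :: (v' :: B.reverse ++ [u'])) := by simp
      _ ~ w :: a :: ((u :: A ++ [v]) ++ (u' :: B ++ [v'])) :=
          (List.perm_middle.trans (.cons _ (.append_left _ hrev))).cons _
      _ ~ a :: w :: l := by simpa [l] using .swap _ _ _
  have hwl : w ∈ L ∧ w ∉ l := by simpa using hw
  have hal : a ∉ l := fun h => by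
    simpa [ha, haL] using hs.toFinset_subset (List.mem_toFinset.2 h)
  have hto : (w :: u :: A ++ v :: a :: v' :: B.reverse ++ [u']).toFinset =
      insert a (insert w l.toFinset) := by
    rw [List.toFinset_eq_of_perm _ _ hperm]; simp
  refine ⟨?_, ?_, ?_, ?_, ?_⟩
  · rw [Cycle.nodup_coe_iff, hperm.nodup_iff]
    have := hs.nodup
    simp only [Cycle.nodup_coe_iff] at this
    simp [this, hal, hwl.2, (ne_of_mem_of_not_mem hwl.1 haL).symm]
  · have hc := hs.chain
    simp only [l, List.cons_append, List.append_assoc, Cycle.chain_coe_cons, List.nil_append,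
      List.isChain_cons_append_cons_cons, List.IsChain.singleton, and_true,
      List.isChain_cons_cons] at hc ⊢
    obtain ⟨hA, -, hB, -⟩ := hc
    refine ⟨h₁, hA, h₂, h₃, ?_, h₄⟩
    simpa using List.isChain_reverse.2 (hB.imp fun _ _ h => h.symm)
  · have := hs.length_eq
    rw [Cycle.length_coe] at this
    rw [Cycle.length_coe, hperm.length_eq, card_insert_of_notMem ha]
    simp only [List.length_cons]
    omega
  · rw [Cycle.coe_toFinset, hto]
    exact (insert_subset_insert _ hs.subset_toFinset).trans
      (insert_subset_insert _ (subset_insert _ _))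
  · rw [Cycle.coe_toFinset, hto]
    refine insert_subset (by simp) (insert_subset (mem_union_right _ hwl.1) ?_)
    exact hs.toFinset_subset.trans (union_subset_union (subset_insert _ _) le_rfl)

theorem card_le_card_sdiff_add {s : Cycle V} (hs : G.IsCycleThrough Y L s) (hYL : Disjoint Y L) :
    #L ≤ #(L \ s.toFinset) + #Y := by
  have hcard : #s.toFinset = 2 * #Y := by
    rw [← hs.length_eq]
    induction s using Quotient.inductionOn' with
    | h l => exact List.toFinset_card_of_nodup hs.nodup
  have h₁ := card_sdiff_add_card_inter L s.toFinset
  have h₂ : #(L ∩ s.toFinset) + #Y ≤ #s.toFinset := by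
    rw [← card_union_of_disjoint (disjoint_of_subset_left inter_subset_left hYL.symm)]
    exact card_le_card (union_subset inter_subset_right hs.subset_toFinset)
  omega

end IsCycleThrough

variable {X L Y : Finset V} {s : Cycle V} {a : V}

theorem IsCycleThrough.exists_insert_of_pivots (hG : G.IsBipartiteWith X L)
    (hs : G.IsCycleThrough Y L s) (ha : a ∈ X) (haY : a ∉ Y) {w₁ x₁ w₂ x₂ v : V}
    {l₁ l₂ : List V} (hw : w₁ ≠ w₂) (h₁ : s = ↑(w₁ :: x₁ :: l₁)) (h₂ : s = ↑(w₂ :: x₂ :: l₂))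
    (ha₁ : G.Adj a w₁) (ha₂ : G.Adj a w₂) (hv : v ∈ L \ s.toFinset) (hv₁ : G.Adj x₁ v)
    (hv₂ : G.Adj x₂ v) : ∃ s', G.IsCycleThrough (insert a Y) L s' := by
  have hXL : Disjoint X L := disjoint_coe.1 hG.disjoint
  have hw₁L : w₁ ∈ L := hG.mem_of_mem_adj ha ha₁
  have hw₂L : w₂ ∈ L := hG.mem_of_mem_adj ha ha₂
  have hx₁X : x₁ ∈ X := hG.mem_of_mem_adj' hw₁L (h₁ ▸ hs.chain).rel_of_coe_cons_cons.symm
  have hx₂X : x₂ ∈ X := hG.mem_of_mem_adj' hw₂L (h₂ ▸ hs.chain).rel_of_coe_cons_cons.symm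
  obtain ⟨A, B, hAB⟩ := Cycle.exists_eq_coe_split hs.nodup h₁ h₂ hw
    (ne_of_mem_of_not_mem hw₂L (Finset.disjoint_left.1 hXL hx₁X))
    (ne_of_mem_of_not_mem hx₂X (Finset.disjoint_right.1 hXL hw₁L))
  rw [hAB, Cycle.coe_toFinset] at hv
  exact ⟨_, (hAB ▸ hs).surgery haY (Finset.disjoint_left.1 hXL ha) hv hv₂.symm ha₁.symm ha₂ hv₁⟩

theorem IsCycleThrough.exists_insert_of_many_pivots [DecidableRel G.Adj] {d : ℕ}
    (hG : G.IsBipartiteWith X L) (hdeg : ∀ x ∈ X, #{w ∈ L | ¬G.Adj x w} ≤ d)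
    (hcard : 5 * d + 4 * #Y < 4 * #L) (hs : G.IsCycleThrough Y L s) (hY : Y ⊆ X)
    (hY₀ : Y.Nonempty) (ha : a ∈ X) (haY : a ∉ Y) (h5 : 5 ≤ #{w ∈ s.toFinset | G.Adj a w}) :
    ∃ s', G.IsCycleThrough (insert a Y) L s' := by
  classical
  set U := L \ s.toFinset
  -- the pivots `w`, each paired with the vertex `x_w` that follows it
  set Q := {p ∈ s.toFinset ×ˢ s.toFinset | G.Adj a p.1 ∧ ∃ l, s = ↑(p.1 :: p.2 :: l)}
  have hQ : #{w ∈ s.toFinset | G.Adj a w} ≤ #Q := by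
    refine (card_le_card fun w hw => ?_).trans (card_image_le (f := Prod.fst) (s := Q))
    obtain ⟨hws, haw⟩ := mem_filter.1 hw
    obtain ⟨x, l, hl⟩ := Cycle.exists_eq_coe_cons_cons (Cycle.mem_toFinset.1 hws)
      (by rw [hs.length_eq]; have := card_pos.2 hY₀; omega)
    have hxs : x ∈ s.toFinset := by simp [hl]
    exact mem_image.2 ⟨(w, x), mem_filter.2 ⟨mem_product.2 ⟨hws, hxs⟩, haw, l, hl⟩, rfl⟩
  have hQX : ∀ p ∈ Q, p.2 ∈ X := by
    intro p hp
    obtain ⟨-, hap, l, hl⟩ := mem_filter.1 hp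
    exact hG.mem_of_mem_adj' (hG.mem_of_mem_adj ha hap) (hl ▸ hs.chain).rel_of_coe_cons_cons.symm
  have hlt : #U < ∑ p ∈ Q, #{v ∈ U | G.Adj p.2 v} := by
    have hU : #L ≤ #U + #Y :=
      hs.card_le_card_sdiff_add (disjoint_of_subset_left hY (disjoint_coe.1 hG.disjoint))
    have hsum := card_nsmul_le_sum Q (fun p => #{v ∈ U | G.Adj p.2 v}) (#U - d) fun p hp => by
      have := card_le_card_filter_adj_add (S := U) sdiff_subset (hdeg _ (hQX p hp))
      omega
    rw [smul_eq_mul] at hsum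
    have := Nat.mul_le_mul_right (#U - d) (h5.trans hQ)
    omega
  obtain ⟨p, hp, q, hq, hpq, hpq'⟩ :=
    exists_ne_not_disjoint_of_card_lt_sum (fun _ _ => filter_subset _ U) hlt
  obtain ⟨v, hvp, hvq⟩ := not_disjoint_iff.1 hpq'
  obtain ⟨-, hap, lp, hlp⟩ := mem_filter.1 hp
  obtain ⟨-, haq, lq, hlq⟩ := mem_filter.1 hq
  have hne : p.1 ≠ q.1 := by
    intro h
    rw [← h] at hlq
    exact hpq (Prod.ext h (Cycle.eq_of_coe_cons_cons_eq (hlp.symm.trans hlq)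
      (Cycle.nodup_coe_iff.1 (hlp ▸ hs.nodup))))
  exact hs.exists_insert_of_pivots hG ha haY hne hlp hlq hap haq (mem_filter.1 hvp).1
    (mem_filter.1 hvp).2 (mem_filter.1 hvq).2

theorem IsCycleThrough.exists_insert_of_few_pivots [DecidableRel G.Adj] {d : ℕ}
    (hG : G.IsBipartiteWith X L) (hdeg : ∀ x ∈ X, #{w ∈ L | ¬G.Adj x w} ≤ d)
    (hL : 2 * d + 6 ≤ #L) (hs : G.IsCycleThrough Y L s) (hY : Y ⊆ X) (hY₂ : 2 ≤ #Y) (ha : a ∈ X)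
    (haY : a ∉ Y) (h4 : #{w ∈ s.toFinset | G.Adj a w} ≤ 4) :
    ∃ s', G.IsCycleThrough (insert a Y) L s' := by
  have hXL : Disjoint X L := disjoint_coe.1 hG.disjoint
  set Z := {w ∈ L \ s.toFinset | G.Adj a w}
  have hZ : #L ≤ #Z + d + 4 := by
    have h₁ := card_le_card_filter_adj_add (subset_refl L) (hdeg a ha)
    have h₂ : {w ∈ L | G.Adj a w} ⊆ Z ∪ {w ∈ s.toFinset | G.Adj a w} := by
      intro w
      simp only [Z, mem_filter, mem_union, mem_sdiff]
      tauto
    have := (card_le_card h₂).trans (card_union_le _ _)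
    omega
  obtain ⟨x₀, hx₀⟩ : Y.Nonempty := card_pos.1 (by omega)
  obtain ⟨w₀, x₁, l, rfl⟩ := Cycle.exists_eq_coe_cons_cons_cons
    (Cycle.mem_toFinset.1 (hs.subset_toFinset hx₀)) (by rw [hs.length_eq]; omega)
  have hc := hs.chain
  simp only [Cycle.chain_coe_cons, List.cons_append, List.isChain_cons_cons] at hc
  have hw₀L : w₀ ∈ L := hG.mem_of_mem_adj (hY hx₀) hc.1
  have hx₁X : x₁ ∈ X := hG.mem_of_mem_adj' hw₀L hc.2.1.symm
  have hZL : Z ⊆ L := (filter_subset _ _).trans sdiff_subset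
  have h₀ := card_le_card_filter_adj_add hZL (hdeg x₀ (hY hx₀))
  have h₁ := card_le_card_filter_adj_add hZL (hdeg x₁ hx₁X)
  obtain ⟨w', hw'⟩ := card_pos.1 (show 0 < #{w ∈ Z | G.Adj x₀ w} by omega)
  obtain ⟨w'', hw'', hne⟩ := exists_mem_ne (show 1 < #{w ∈ Z | G.Adj x₁ w} by omega) w'
  simp only [Z, mem_filter, Cycle.coe_toFinset] at hw' hw''
  exact ⟨_, hs.insert_between (fun h => Finset.disjoint_left.1 hXL (hY h) hw₀L) haY
    (Finset.disjoint_left.1 hXL ha) hw'.1.1 hw''.1.1 hne.symm hw'.2 hw'.1.2.symm hw''.1.2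
    hw''.2.symm⟩

theorem exists_isCycleThrough_pair [DecidableRel G.Adj] {d : ℕ} (hG : G.IsBipartiteWith X L)
    (hdeg : ∀ x ∈ X, #{w ∈ L | ¬G.Adj x w} ≤ d) (hL : 2 * d + 2 ≤ #L) {x y : V} (hx : x ∈ X)
    (hy : y ∈ X) (hxy : x ≠ y) : ∃ s, G.IsCycleThrough {x, y} L s := by
  have hXL : Disjoint X L := disjoint_coe.1 hG.disjoint
  have h₁ := card_le_card_filter_adj_add (subset_refl L) (hdeg x hx)
  have h₂ := card_le_card_filter_adj_add (filter_subset (G.Adj x ·) L) (hdeg y hy)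
  obtain ⟨w, hw, w', hw', hww⟩ :=
    one_lt_card.1 (show 1 < #{w ∈ {w ∈ L | G.Adj x w} | G.Adj y w} by omega)
  simp only [mem_filter] at hw hw'
  exact ⟨_, .pair hxy hww (Finset.disjoint_left.1 hXL hx) (Finset.disjoint_left.1 hXL hy) hw.1.1
    hw'.1.1 hw.1.2 hw.2.symm hw'.2 hw'.1.2.symm⟩

theorem exists_isCycleThrough [DecidableRel G.Adj] {d : ℕ} (hG : G.IsBipartiteWith X L)
    (hdeg : ∀ x ∈ X, #{w ∈ L | ¬G.Adj x w} ≤ d) (h₁ : 2 * d + 6 ≤ #L)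
    (h₂ : 5 * d + 4 * #X < 4 * #L + 4) (hY : Y ⊆ X) (hY₂ : 2 ≤ #Y) :
    ∃ s, G.IsCycleThrough Y L s := by
  induction Y using Finset.induction_on with
  | empty => simp at hY₂
  | insert a Y haY ih =>
    rw [card_insert_of_notMem haY] at hY₂
    have hYX := (subset_insert _ _).trans hY
    have ha := hY (mem_insert_self a Y)
    obtain hY₁ | hY₂ := (show #Y = 1 ∨ 2 ≤ #Y by omega)
    · obtain ⟨y, rfl⟩ := card_eq_one.1 hY₁
      exact exists_isCycleThrough_pair hG hdeg (by omega) ha (hY (by simp)) (by simpa using haY)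
    obtain ⟨s, hs⟩ := ih hYX hY₂
    have : #Y < #X := card_lt_card ⟨hYX, fun h => haY (h ha)⟩
    by_cases h5 : 5 ≤ #{w ∈ s.toFinset | G.Adj a w}
    · exact hs.exists_insert_of_many_pivots hG hdeg (by omega) hYX (card_pos.1 (by omega)) ha haY h5
    · exact hs.exists_insert_of_few_pivots hG hdeg h₁ hYX hY₂ ha haY (by omega)

end CycleThrough

theorem IsBipartiteWith.exists_isCycle_length_eq_two_mul_card [DecidableRel G.Adj]
    {X L : Finset V} {d : ℕ} (hG : G.IsBipartiteWith X L)
    (hdeg : ∀ x ∈ X, #{w ∈ L | ¬G.Adj x w} ≤ d) (h₁ : 2 * d + 6 ≤ #L)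
    (h₂ : 5 * d + 4 * #X < 4 * #L + 4) (hX : 2 ≤ #X) :
    ∃ (u : V) (c : G.Walk u u), c.IsCycle ∧ c.length = 2 * #X := by
  classical
  obtain ⟨s, hs⟩ := exists_isCycleThrough hG hdeg h₁ h₂ subset_rfl hX
  rw [← hs.length_eq]
  exact exists_isCycle_of_chain hs.nodup hs.chain (by rw [hs.length_eq]; omega)

theorem isBipartiteWith_inf_fromRel {s t : Set V} (h : Disjoint s t) :
    (G ⊓ fromRel fun a b => a ∈ s ∧ b ∈ t).IsBipartiteWith s t where
  disjoint := h
  mem_of_adj v w hvw := by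
    simp only [inf_adj, fromRel_adj] at hvw
    tauto

theorem inf_fromRel_adj_iff {s t : Set V} (h : Disjoint s t) {v w : V} (hv : v ∈ s) (hw : w ∈ t) :
    (G ⊓ fromRel fun a b => a ∈ s ∧ b ∈ t).Adj v w ↔ G.Adj v w := by
  have : v ≠ w := fun hvw => Set.disjoint_left.1 h hv (hvw ▸ hw)
  simp [this, hv, hw]

theorem hasCycleLength_inf_fromRel [DecidableRel G.Adj] {X L : Finset V} {d : ℕ}
    (hXL : Disjoint X L) (hdeg : ∀ x ∈ X, #{w ∈ L | ¬G.Adj x w} ≤ d) (h₁ : 2 * d + 6 ≤ #L)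
    (h₂ : 5 * d + 4 * #X < 4 * #L + 4) (hX : 2 ≤ #X) :
    hasCycleLength (G ⊓ fromRel fun a b => a ∈ X ∧ b ∈ L) (2 * #X) := by
  classical
  refine (isBipartiteWith_inf_fromRel (disjoint_coe.2 hXL)).exists_isCycle_length_eq_two_mul_card
    (fun x hx => ?_) h₁ h₂ hX
  rw [filter_congr fun w hw => not_congr (inf_fromRel_adj_iff (disjoint_coe.2 hXL) (s := X) hx hw)]
  exact hdeg x hx

variable [DecidableEq V] {R B : SimpleGraph V} [DecidableRel G.Adj] [DecidableRel R.Adj]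
  [DecidableRel B.Adj] {L : Finset V} {x : V}

theorem card_filter_not_adj_le_of_sup_eq (hRB : R ⊔ B = G) :
    #{w ∈ L | ¬R.Adj x w} ≤ #{w ∈ L | ¬G.Adj x w} + #{w ∈ L | B.Adj x w} := by
  refine (card_le_card fun w hw => ?_).trans (card_union_le _ _)
  simp only [← hRB, mem_filter, mem_union, sup_adj] at hw ⊢
  tauto

theorem card_filter_not_adj_add_degree_lt [Fintype V] (hx : x ∉ L) :
    #{w ∈ L | ¬G.Adj x w} + G.degree x < Fintype.card V := by
  rw [← card_neighborFinset_eq_degree, ← card_union_of_disjoint]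
  · refine (card_le_card (t := univ.erase x) fun w hw => ?_).trans_lt
      (card_erase_lt_of_mem (mem_univ x))
    simp only [mem_union, mem_filter, mem_neighborFinset] at hw
    refine mem_erase.2 ⟨?_, mem_univ w⟩
    rintro rfl
    exact hw.elim (fun hw => hx hw.1) G.irrefl
  · exact Finset.disjoint_left.2 fun w hw hw' =>
      (mem_filter.1 hw).2 ((mem_neighborFinset _ _ _).1 hw')

theorem card_filter_not_adj_lt_of_sup_eq [Fintype V] (hRB : R ⊔ B = G) (hx : x ∉ L) {k b : ℝ}
    (hk : k ≤ G.degree x) (hb : (#{w ∈ L | B.Adj x w} : ℝ) < b) :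
    (#{w ∈ L | ¬R.Adj x w} : ℝ) < Fintype.card V - 1 - k + b := by
  have h₁ := card_filter_not_adj_add_degree_lt (G := G) hx
  have h₂ := card_filter_not_adj_le_of_sup_eq (L := L) (x := x) hRB
  have : (#{w ∈ L | ¬R.Adj x w} : ℝ) + G.degree x + 1 ≤ Fintype.card V + #{w ∈ L | B.Adj x w} := by
    exact_mod_cast (by omega)
  linarith

end SimpleGraph

theorem stmt17 (δ : ℝ) (hδ0 : 0 < δ) (hδ1 : δ < 1 / 1000) :
    ∃ n₀ : ℕ, ∀ n t r : ℕ, n₀ ≤ n → n = 3 * t + r → r ≤ 2 →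
    ∀ (V : Type) [Fintype V] [DecidableEq V]
      (G R B : SimpleGraph V)
      [DecidableRel G.Adj] [DecidableRel R.Adj] [DecidableRel B.Adj],
      Fintype.card V = n →
      -- minimum degree at least (3n - 1)/4
      (∀ v : V, (3 * (n : ℝ) - 1) / 4 ≤ G.degree v) →
      -- red/blue coloring
      R ⊔ B = G →
      ∀ (L X : Finset V) (m : ℕ),
        -- |L| ≥ (2/3 - δ)n
        ((2 : ℝ) / 3 - δ) * n ≤ L.card →
        -- X ⊆ V(G) \ L, |X| = m ≤ t + 1 (and m ≥ 2 so that a cycle can exist)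
        X ⊆ Finset.univ \ L → X.card = m → 2 ≤ m → m ≤ t + 1 →
        -- every x ∈ X has fewer than δn + 2 blue edges into L
        (∀ x ∈ X, ((L.filter fun w => B.Adj x w).card : ℝ) < δ * n + 2) →
        -- conclusions
        ((∀ x ∈ X, ((5 : ℝ) / 12 - 3 * δ) * n ≤ (L.filter fun w => R.Adj x w).card) ∧
          hasCycleLength
            (R ⊓ SimpleGraph.fromRel fun a b => a ∈ X ∧ b ∈ L) (2 * m)) := by
  refine ⟨max 2000 ⌈2 / δ⌉₊, fun n t r hn hntr hr V _ _ G R B _ _ _ hcard hmin hRB L X m hL hXL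
    hXm hm hmt hblue => ?_⟩
  have hn₀ : (2000 : ℝ) ≤ n := by exact_mod_cast (le_max_left _ _).trans hn
  have hδn : 2 ≤ δ * n := by
    have : 2 / δ ≤ n := (Nat.le_ceil _).trans (by exact_mod_cast (le_max_right _ _).trans hn)
    rwa [div_le_iff₀ hδ0, mul_comm] at this
  have hδn' : δ * n ≤ n / 1000 := by nlinarith
  have hm₃ : 3 * (m : ℝ) ≤ n + 3 := by exact_mod_cast (show 3 * m ≤ n + 3 by omega)
  have hXL' : Disjoint X L := (subset_sdiff.1 hXL).2
  set F : ℝ := (n - 3) / 4 + δ * n + 2 with hF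
  have hnonred : ∀ x ∈ X, (#{w ∈ L | ¬R.Adj x w} : ℝ) < F := fun x hx => by
    have := SimpleGraph.card_filter_not_adj_lt_of_sup_eq hRB (Finset.disjoint_left.1 hXL' hx)
      (hmin x) (hblue x hx)
    rw [hcard] at this
    linarith
  refine ⟨fun x hx => ?_, ?_⟩
  · have : (#{w ∈ L | R.Adj x w} : ℝ) + #{w ∈ L | ¬R.Adj x w} = #L := by
      exact_mod_cast card_filter_add_card_filter_not (s := L) (fun w => R.Adj x w)
    linarith [hnonred x hx]
  have hd : (⌊F⌋₊ : ℝ) ≤ F := Nat.floor_le (by linarith)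
  have h₁ : 2 * ⌊F⌋₊ + 6 ≤ #L := by exact_mod_cast (show (2 * ⌊F⌋₊ + 6 : ℝ) ≤ #L by linarith)
  have h₂ : 5 * ⌊F⌋₊ + 4 * #X < 4 * #L + 4 := by
    exact_mod_cast (show (5 * ⌊F⌋₊ + 4 * #X : ℝ) < 4 * #L + 4 by rw [hXm]; linarith)
  exact hXm ▸ SimpleGraph.hasCycleLength_inf_fromRel hXL'
    (fun x hx => Nat.le_floor (hnonred x hx).le) h₁ h₂ (hXm ▸ hm)
end
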